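/- arXiv:1511.08302 — 11 statements merged into one kernel-verified Lean document; each statement's English description precedes it below -/
import Mathlib

section
/- Let F be a field and m, n, p, q positive integers. If linear maps φ : M_{m×p}(F) → M_{m×q}(F) and ψ : M_{n×p}(F) → M_{n×q}(F) satisfy φ(A·B) = A·ψ(B) for all A ∈ M_{m×n}(F) and B ∈ M_{n×p}(F), then there exists a matrix X ∈ M_{p×q}(F) such that φ(C) = C·X for all C ∈ M_{m×p}(F) and ψ(D) = D·X for all D ∈ M_{n×p}(F). -/
/-!
Multiplying by the matrix unit `E i₀ j` on the left gives `(ψ B)ⱼ = (φ (E i₀ j * B))ᵢ₀`, and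
`E i₀ j * B` only sees row `j` of `B`; so `ψ` acts on each row by one and the same linear map,
i.e. `ψ D = D * X`. Then `φ (A * B) = A * B * X`, and every `C` is a sum of such products:
`C = ∑ i, E i j₀ * (E j₀ i * C)`.
-/

namespace Matrix

variable {R : Type*} [CommSemiring R] {l m n p q : Type*}

theorem single_one_mul_eq_sum_smul [DecidableEq l] [DecidableEq m] [Fintype m] [DecidableEq p]
    [Fintype p] (i : l) (j : m) (D : Matrix m p R) :
    single i j (1 : R) * D = ∑ k, D j k • single i k 1 := by
  ext a b
  simp [mul_apply, single, sum_apply, ite_and]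

theorem sum_single_mul_single_mul [DecidableEq m] [Fintype m] [DecidableEq n] [Fintype n]
    (j : n) (C : Matrix m p R) :
    ∑ i : m, single i j (1 : R) * (single j i (1 : R) * C) = C := by
  simp only [← Matrix.mul_assoc, single_mul_single_same, mul_one]
  rw [← Matrix.sum_mul, sum_single_one, Matrix.one_mul]

variable [DecidableEq m] [DecidableEq n] [Fintype n] [Fintype p]
  (φ : Matrix m p R →ₗ[R] Matrix m q R) (ψ : Matrix n p R →ₗ[R] Matrix n q R)

theorem exists_eq_mul_of_map_mul_eq_mul_map [DecidableEq p] (i₀ : m)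
    (h : ∀ (A : Matrix m n R) (B : Matrix n p R), φ (A * B) = A * ψ B) :
    ∃ X : Matrix p q R, ∀ D, ψ D = D * X := by
  refine ⟨of fun k l => φ (single i₀ k 1) i₀ l, fun D => ?_⟩
  ext j l
  have hrow := congr_fun₂ (h (single i₀ j 1) D) i₀ l
  rw [single_mul_apply_same, one_mul, single_one_mul_eq_sum_smul, map_sum] at hrow
  simp only [map_smul, sum_apply, smul_apply, smul_eq_mul] at hrow
  simp [← hrow, mul_apply]

theorem map_eq_mul_of_map_mul_eq_mul_map [Fintype m] (j₀ : n) (X : Matrix p q R)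
    (h : ∀ (A : Matrix m n R) (B : Matrix n p R), φ (A * B) = A * ψ B)
    (hψ : ∀ D, ψ D = D * X) (C : Matrix m p R) : φ C = C * X := by
  rw [← sum_single_mul_single_mul j₀ C, map_sum, Matrix.sum_mul]
  simp only [h, hψ, Matrix.mul_assoc]

end Matrix

theorem stmt2_general (F : Type*) [Field F] (m n p q : ℕ)
    (hm : 0 < m) (hn : 0 < n)
    (φ : Matrix (Fin m) (Fin p) F →ₗ[F] Matrix (Fin m) (Fin q) F)
    (ψ : Matrix (Fin n) (Fin p) F →ₗ[F] Matrix (Fin n) (Fin q) F)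
    (h : ∀ (A : Matrix (Fin m) (Fin n) F) (B : Matrix (Fin n) (Fin p) F),
      φ (A * B) = A * ψ B) :
    ∃ X : Matrix (Fin p) (Fin q) F,
      (∀ C : Matrix (Fin m) (Fin p) F, φ C = C * X) ∧
      (∀ D : Matrix (Fin n) (Fin p) F, ψ D = D * X) := by
  obtain ⟨X, hψ⟩ := Matrix.exists_eq_mul_of_map_mul_eq_mul_map φ ψ ⟨0, hm⟩ h
  exact ⟨X, Matrix.map_eq_mul_of_map_mul_eq_mul_map φ ψ ⟨0, hn⟩ X h hψ, hψ⟩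

theorem stmt2 (F : Type*) [Field F] (m n p q : ℕ)
    (hm : 0 < m) (hn : 0 < n) (hp : 0 < p) (hq : 0 < q)
    (φ : Matrix (Fin m) (Fin p) F →ₗ[F] Matrix (Fin m) (Fin q) F)
    (ψ : Matrix (Fin n) (Fin p) F →ₗ[F] Matrix (Fin n) (Fin q) F)
    (h : ∀ (A : Matrix (Fin m) (Fin n) F) (B : Matrix (Fin n) (Fin p) F),
      φ (A * B) = A * ψ B) :
    ∃ X : Matrix (Fin p) (Fin q) F,
      (∀ C : Matrix (Fin m) (Fin p) F, φ C = C * X) ∧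
      (∀ D : Matrix (Fin n) (Fin p) F, ψ D = D * X) :=
  stmt2_general F m n p q hm hn φ ψ h
end

section
/- Let F be a field and m, n, p, q positive integers. If linear maps φ : M_{m×p}(F) → M_{n×p}(F) and ψ : M_{m×q}(F) → M_{n×q}(F) satisfy φ(B·A) = ψ(B)·A for all A ∈ M_{q×p}(F) and B ∈ M_{m×q}(F), then there exists X ∈ M_{n×m}(F) such that φ(C) = X·C for all C ∈ M_{m×p}(F) and ψ(D) = X·D for all D ∈ M_{m×q}(F). -/
/-!
Composing the hypothesis with a further right factor shows that `ψ (B * A) * A' = ψ B * A * A'`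
for every `q × p` matrix `A'`; as `p > 0` such factors separate `n × q` matrices, so `ψ` commutes
with right multiplication by `q × q` matrices and is therefore left multiplication by some `X`.
Then `φ` agrees with `X * ·` on all products `B * A`, and since `q > 0` these products contain
every matrix unit `E_{ij} = E_{i0} * E_{0j}`, so `φ = X * ·`.
-/

namespace Matrix

variable {R : Type*} {l m n k : Type*}

theorem eq_of_forall_mul_eq_mul [Semiring R] [Fintype k] [DecidableEq k] [Nonempty l]
    [DecidableEq l] {M M' : Matrix n k R} (h : ∀ A : Matrix k l R, M * A = M' * A) : M = M' := by
  obtain ⟨z⟩ := ‹Nonempty l›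
  ext i j
  simpa using congrFun₂ (h (single j z 1)) i z

theorem mul_single_one_eq_sum [Semiring R] [Fintype m] [DecidableEq m] [Fintype k]
    [DecidableEq k] [DecidableEq l] (B : Matrix m k R) (j : k) (z : l) :
    B * single j z (1 : R) = ∑ i, B i j • single i z (1 : R) := by
  ext a b
  rcases eq_or_ne b z with rfl | hb
  · simp [sum_apply, single_apply]
  · simp [hb, Ne.symm hb, sum_apply]

theorem exists_eq_mul_of_map_mul_eq [CommSemiring R] [Fintype m] [DecidableEq m] [Fintype k]
    [DecidableEq k] [Nonempty k] (f : Matrix m k R →ₗ[R] Matrix n k R)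
    (hf : ∀ (B : Matrix m k R) (A : Matrix k k R), f (B * A) = f B * A) :
    ∃ X : Matrix n m R, ∀ B, f B = X * B := by
  obtain ⟨z⟩ := ‹Nonempty k›
  refine ⟨of fun i j => f (single j z 1) i z, fun B => ?_⟩
  ext i j
  calc f B i j = f (B * single j z (1 : R)) i z := by simp [hf]
    _ = ∑ c, B c j * f (single c z 1) i z := by
      simp only [mul_single_one_eq_sum, map_sum, map_smul, sum_apply, smul_apply, smul_eq_mul]
    _ = _ := by simp only [mul_apply, of_apply, mul_comm]

theorem linearMap_ext_of_map_mul_eq [Semiring R] {M : Type*} [AddCommMonoid M] [Module R M]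
    [Finite m] [DecidableEq m] [Fintype k] [DecidableEq k] [Nonempty k] [Finite l]
    [DecidableEq l] {f g : Matrix m l R →ₗ[R] M}
    (h : ∀ (B : Matrix m k R) (A : Matrix k l R), f (B * A) = g (B * A)) : f = g := by
  obtain ⟨z⟩ := ‹Nonempty k›
  refine ext_linearMap R fun i j => LinearMap.ext fun a => ?_
  simpa using h (single i z a) (single z j 1)

end Matrix

open Matrix in
theorem stmt3_general (F : Type*) [Field F] (m n p q : ℕ)
    (hp : 0 < p) (hq : 0 < q)
    (φ : Matrix (Fin m) (Fin p) F →ₗ[F] Matrix (Fin n) (Fin p) F)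
    (ψ : Matrix (Fin m) (Fin q) F →ₗ[F] Matrix (Fin n) (Fin q) F)
    (h : ∀ (A : Matrix (Fin q) (Fin p) F) (B : Matrix (Fin m) (Fin q) F),
      φ (B * A) = ψ B * A) :
    ∃ X : Matrix (Fin n) (Fin m) F,
      (∀ C : Matrix (Fin m) (Fin p) F, φ C = X * C) ∧
      (∀ D : Matrix (Fin m) (Fin q) F, ψ D = X * D) := by
  have : NeZero p := ⟨hp.ne'⟩
  have : NeZero q := ⟨hq.ne'⟩
  have hψ (B : Matrix (Fin m) (Fin q) F) (A : Matrix (Fin q) (Fin q) F) :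
      ψ (B * A) = ψ B * A :=
    eq_of_forall_mul_eq_mul (l := Fin p) fun A' => by
      rw [← h, Matrix.mul_assoc, h, Matrix.mul_assoc]
  obtain ⟨X, hX⟩ := exists_eq_mul_of_map_mul_eq ψ hψ
  have hφ : φ = mulLeftLinearMap (Fin p) F X :=
    linearMap_ext_of_map_mul_eq (k := Fin q) fun B A => by simp [h, hX, Matrix.mul_assoc]
  exact ⟨X, fun C => by simp [hφ], hX⟩

theorem stmt3 (F : Type*) [Field F] (m n p q : ℕ)
    (hm : 0 < m) (hn : 0 < n) (hp : 0 < p) (hq : 0 < q)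
    (φ : Matrix (Fin m) (Fin p) F →ₗ[F] Matrix (Fin n) (Fin p) F)
    (ψ : Matrix (Fin m) (Fin q) F →ₗ[F] Matrix (Fin n) (Fin q) F)
    (h : ∀ (A : Matrix (Fin q) (Fin p) F) (B : Matrix (Fin m) (Fin q) F),
      φ (B * A) = ψ B * A) :
    ∃ X : Matrix (Fin n) (Fin m) F,
      (∀ C : Matrix (Fin m) (Fin p) F, φ C = X * C) ∧
      (∀ D : Matrix (Fin m) (Fin q) F, ψ D = X * D) :=
  stmt3_general F m n p q hp hq φ ψ h
end

section
/- Let F be a field with characteristic different from 2 and 3, let n ≥ 1 and m ≥ 1. If a linear map φ : sl_n(F) → M_{n×m}(F) satisfies φ(AB − BA) = A·φ(B) − B·φ(A) for all A, B ∈ sl_n(F), then there exists X ∈ M_{n×m}(F) such that φ(C) = C·X for all C ∈ sl_n(F). -/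
/-!
Write `E i j` for the matrix units. For `i ≠ j`, the cocycle identity applied to
`[E i i - E j j, E i j] = 2 • E i j` kills every row of `φ (E i j)` except row `i` (row `j` needs
`3` invertible, the others `2`), and applied to `[E i j, E j k] = E i k` it shows that row `i` of
`φ (E i k)` depends on `k` only. Collecting these rows into `X` gives `φ (E i j) = E i j * X`;
then `[E i j, E j i] = E i i - E j j` gives the same on the diagonal part of a basis of `𝔰𝔩 n`.
-/

open Matrix

/-- `φ` is a 1-cocycle of `𝔰𝔩 n` with values in the `n × m` matrices, on which `𝔰𝔩 n` acts by
left multiplication. -/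
def IsSlCocycle {R n m : Type*} [CommRing R] [Fintype n]
    (φ : Matrix n n R →ₗ[R] Matrix n m R) : Prop :=
  ∀ A B : Matrix n n R, A.trace = 0 → B.trace = 0 → φ (A * B - B * A) = A * φ B - B * φ A

namespace Matrix

variable {R n : Type*} [CommRing R] [Fintype n] [DecidableEq n]

omit [DecidableEq n] in
theorem eq_zero_of_trace_eq_zero [Subsingleton n] {C : Matrix n n R} (hC : C.trace = 0) :
    C = 0 := by
  ext i j
  obtain rfl := Subsingleton.elim i j
  rwa [trace, Fintype.sum_subsingleton _ i] at hC

theorem linearMap_eq_zero_of_trace_eq_zero {M : Type*} [AddCommGroup M] [Module R M]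
    (f : Matrix n n R →ₗ[R] M) (hoff : ∀ i j, i ≠ j → f (single i j 1) = 0)
    (hdiag : ∀ i j, i ≠ j → f (single i i 1 - single j j 1) = 0) {C : Matrix n n R}
    (hC : C.trace = 0) : f C = 0 := by
  rcases isEmpty_or_nonempty n with _ | ⟨⟨i₀⟩⟩
  · simp [Subsingleton.elim C 0]
  have hdiag₀ (i : n) : f (single i i 1) = f (single i₀ i₀ 1) := by
    obtain rfl | hi := eq_or_ne i i₀
    · rfl
    · rw [← sub_eq_zero, ← map_sub, hdiag i i₀ hi]
  have hrow (i : n) : ∑ j, C i j • f (single i j 1) = C i i • f (single i₀ i₀ 1) := by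
    rw [Finset.sum_eq_single i (fun j _ hji => by rw [hoff i j hji.symm, smul_zero])
      (by simp), hdiag₀]
  calc f C = ∑ i, ∑ j, C i j • f (single i j 1) := by
        conv_lhs => rw [matrix_eq_sum_single C]
        simp only [map_sum, ← map_smul, smul_single, smul_eq_mul, mul_one]
    _ = C.trace • f (single i₀ i₀ 1) := by simp only [hrow, ← Finset.sum_smul, trace, diag]
    _ = 0 := by rw [hC, zero_smul]

end Matrix

namespace IsSlCocycle

variable {R n m : Type*} [CommRing R] [Fintype n] [DecidableEq n]
  {φ : Matrix n n R →ₗ[R] Matrix n m R}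

theorem apply_single_apply_eq_zero (hφ : IsSlCocycle φ) (h2 : IsUnit (2 : R))
    (h3 : IsUnit (3 : R)) {i j : n} (hij : i ≠ j) {a : n} (ha : a ≠ i) (b : m) :
    φ (single i j 1) a b = 0 := by
  have hcomm : (single i i 1 - single j j 1) * single i j 1 -
      single i j 1 * (single i i 1 - single j j 1) = (2 : R) • single i j (1 : R) := by
    simp [sub_mul, mul_sub, single_mul_single_of_ne, hij.symm, two_smul]
  have key := congr_fun₂ (hφ (single i i 1 - single j j 1) (single i j 1) (by simp [trace_sub])
    (trace_single_eq_of_ne i j 1 hij)) a b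
  rw [hcomm, map_smul] at key
  simp only [Matrix.sub_apply, Matrix.sub_mul, Matrix.smul_apply, smul_eq_mul,
    single_mul_apply_of_ne _ _ _ _ _ ha, sub_zero, zero_sub] at key
  by_cases haj : a = j
  · subst haj
    rw [single_mul_apply_same, one_mul] at key
    exact h3.mul_right_eq_zero.mp (by linear_combination key)
  · rw [single_mul_apply_of_ne _ _ _ _ _ haj, neg_zero] at key
    exact h2.mul_right_eq_zero.mp key

theorem apply_single_apply_self_eq (hφ : IsSlCocycle φ) {i j k : n} (hik : i ≠ k)
    (hjk : j ≠ k) (b : m) : φ (single i k 1) i b = φ (single j k 1) j b := by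
  obtain rfl | hij := eq_or_ne i j
  · rfl
  have hcomm : single i j 1 * single j k 1 - single j k 1 * single i j 1 = single i k (1 : R) := by
    simp [single_mul_single_of_ne _ _ _ _ hik.symm]
  have key := congr_fun₂ (hφ (single i j 1) (single j k 1) (trace_single_eq_of_ne i j 1 hij)
    (trace_single_eq_of_ne j k 1 hjk)) i b
  rwa [hcomm, Matrix.sub_apply, single_mul_apply_same, one_mul,
    single_mul_apply_of_ne _ _ _ _ _ hij, sub_zero] at key

variable [Nontrivial n]

/-- Every `i ≠ k` would give the same row `k` here, by `apply_single_apply_self_eq`. -/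
noncomputable def primitive (φ : Matrix n n R →ₗ[R] Matrix n m R) : Matrix n m R :=
  of fun k b => φ (single (exists_ne k).choose k 1) (exists_ne k).choose b

theorem apply_single_of_ne (hφ : IsSlCocycle φ) (h2 : IsUnit (2 : R)) (h3 : IsUnit (3 : R))
    {i j : n} (hij : i ≠ j) : φ (single i j 1) = single i j (1 : R) * primitive φ := by
  ext a b
  obtain rfl | ha := eq_or_ne a i
  · rw [single_mul_apply_same, one_mul, primitive, of_apply]
    exact hφ.apply_single_apply_self_eq hij (exists_ne j).choose_spec b
  · rw [single_mul_apply_of_ne _ _ _ _ _ ha]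
    exact hφ.apply_single_apply_eq_zero h2 h3 hij ha b

theorem apply_single_sub_single (hφ : IsSlCocycle φ) (h2 : IsUnit (2 : R))
    (h3 : IsUnit (3 : R)) {i j : n} (hij : i ≠ j) :
    φ (single i i 1 - single j j 1) = (single i i 1 - single j j (1 : R)) * primitive φ := by
  have hcomm : single i j 1 * single j i 1 - single j i 1 * single i j 1 =
      single i i 1 - single j j (1 : R) := by
    simp
  calc φ (single i i 1 - single j j 1)
      = single i j (1 : R) * φ (single j i 1) - single j i (1 : R) * φ (single i j 1) := by
        rw [← hcomm]
        exact hφ _ _ (trace_single_eq_of_ne i j 1 hij) (trace_single_eq_of_ne j i 1 hij.symm)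
    _ = (single i i 1 - single j j (1 : R)) * primitive φ := by
        rw [hφ.apply_single_of_ne h2 h3 hij, hφ.apply_single_of_ne h2 h3 hij.symm, ← hcomm,
          Matrix.sub_mul, Matrix.mul_assoc, Matrix.mul_assoc]

theorem apply_eq_mul_primitive (hφ : IsSlCocycle φ) (h2 : IsUnit (2 : R))
    (h3 : IsUnit (3 : R)) {C : Matrix n n R} (hC : C.trace = 0) : φ C = C * primitive φ :=
  sub_eq_zero.mp <| linearMap_eq_zero_of_trace_eq_zero (φ - mulRightLinearMap n R (primitive φ))
    (fun i j hij => by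
      rw [LinearMap.sub_apply, hφ.apply_single_of_ne h2 h3 hij, mulRightLinearMap_apply, sub_self])
    (fun i j hij => by
      rw [LinearMap.sub_apply, hφ.apply_single_sub_single h2 h3 hij, mulRightLinearMap_apply,
        sub_self])
    hC

end IsSlCocycle

theorem stmt5_general (F : Type*) [Field F] (h2 : ringChar F ≠ 2) (h3 : ringChar F ≠ 3)
    (n m : ℕ)
    (φ : Matrix (Fin n) (Fin n) F →ₗ[F] Matrix (Fin n) (Fin m) F)
    (h : ∀ A B : Matrix (Fin n) (Fin n) F, A.trace = 0 → B.trace = 0 →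
      φ (A * B - B * A) = A * φ B - B * φ A) :
    ∃ X : Matrix (Fin n) (Fin m) F,
      ∀ C : Matrix (Fin n) (Fin n) F, C.trace = 0 → φ C = C * X := by
  rcases subsingleton_or_nontrivial (Fin n) with _ | _
  · exact ⟨0, fun C hC => by rw [eq_zero_of_trace_eq_zero hC, map_zero, Matrix.zero_mul]⟩
  have h2' : IsUnit (2 : F) := (Ring.two_ne_zero h2).isUnit
  have h3' : IsUnit (3 : F) := by
    simpa using (CharP.cast_ne_zero_of_ne_of_prime F Nat.prime_three h3).isUnit
  exact ⟨_, fun C => IsSlCocycle.apply_eq_mul_primitive h h2' h3'⟩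

theorem stmt5 (F : Type*) [Field F] (h2 : ringChar F ≠ 2) (h3 : ringChar F ≠ 3)
    (n m : ℕ) (hn : 1 ≤ n) (hm : 1 ≤ m)
    (φ : Matrix (Fin n) (Fin n) F →ₗ[F] Matrix (Fin n) (Fin m) F)
    (h : ∀ A B : Matrix (Fin n) (Fin n) F, A.trace = 0 → B.trace = 0 →
      φ (A * B - B * A) = A * φ B - B * φ A) :
    ∃ X : Matrix (Fin n) (Fin m) F,
      ∀ C : Matrix (Fin n) (Fin n) F, C.trace = 0 → φ C = C * X :=
  stmt5_general F h2 h3 n m φ h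
end

section
/- Let F be a field with characteristic different from 2 and 3, let n ≥ 1 and m ≥ 1. If a linear map φ : sl_n(F) → M_{m×n}(F) satisfies φ(AB − BA) = φ(A)·B − φ(B)·A for all A, B ∈ sl_n(F), then there exists X ∈ M_{m×n}(F) such that φ(C) = X·C for all C ∈ sl_n(F). -/
/-!
Write `E i j` for the matrix units. Entrywise, `[E i i - E j j, E i j] = 2 E i j` forces `φ (E i j)`
to vanish outside column `j`, and `[E i k, E k j] = E i j` shows that column `j` of `φ (E i j)`
depends only on `i`; taking it as column `i` of `X` gives `φ (E i j) = X E i j` for `i ≠ j`.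
Then `[E i j, E j i] = E i i - E j j` gives the same on the diagonal differences, and together
these matrices span the traceless matrices.
-/

open Matrix

namespace Matrix

theorem mul_single_apply {α l m n : Type*} [NonAssocSemiring α] [Fintype m] [DecidableEq m]
    [DecidableEq n] (M : Matrix l m α) (a : m) (b : n) (x : α) (r : l) (c : n) :
    (M * single a b x) r c = if c = b then M r a * x else 0 := by
  split_ifs with hc
  · rw [hc, mul_single_apply_same]
  · exact mul_single_apply_of_ne x a b r c hc M

variable {R ι : Type*} [CommRing R] [Fintype ι] [DecidableEq ι]

theorem mem_span_single_of_trace_eq_zero {C : Matrix ι ι R} (hC : C.trace = 0) :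
    C ∈ Submodule.span R ({A | ∃ i j : ι, i ≠ j ∧ A = single i j 1} ∪
      {A | ∃ i j : ι, A = single i i 1 - single j j 1}) := by
  cases isEmpty_or_nonempty ι with
  | inl _ => simp [Subsingleton.elim C 0]
  | inr h =>
    obtain ⟨z⟩ := h
    -- subtracting `(trace C) • single z z 1 = 0` pairs each diagonal entry with `single z z 1`
    have hC' : C = ∑ i, ∑ j,
        (C i j • single i j 1 - if i = j then C i i • single z z 1 else 0) := by
      simp only [Finset.sum_sub_distrib, Finset.sum_ite_eq, Finset.mem_univ, if_true,
        ← Finset.sum_smul]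
      rw [show ∑ i, C i i = C.trace from rfl, hC, zero_smul, sub_zero]
      conv_lhs => rw [matrix_eq_sum_single C]
      simp only [smul_single, smul_eq_mul, mul_one]
    rw [hC']
    refine Submodule.sum_mem _ fun i _ => Submodule.sum_mem _ fun j _ => ?_
    by_cases hij : i = j
    · subst hij
      rw [if_pos rfl, ← smul_sub]
      exact Submodule.smul_mem _ _ (Submodule.subset_span (Or.inr ⟨i, z, rfl⟩))
    · rw [if_neg hij, sub_zero]
      exact Submodule.smul_mem _ _ (Submodule.subset_span (Or.inl ⟨i, j, hij, rfl⟩))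

end Matrix

section

variable {F ι κ : Type*} [Field F] [Fintype ι] [DecidableEq ι]
  {φ : Matrix ι ι F →ₗ[F] Matrix κ ι F}
  (hφ : ∀ A B : Matrix ι ι F, A.trace = 0 → B.trace = 0 →
    φ (A * B - B * A) = φ A * B - φ B * A)
include hφ

theorem apply_single_apply_of_ne (h2 : (2 : F) ≠ 0) (h3 : (3 : F) ≠ 0) {i j : ι} (hij : i ≠ j)
    (r : κ) {l : ι} (hl : l ≠ j) : φ (single i j 1) r l = 0 := by
  have hcomm : (single i i 1 - single j j 1) * single i j 1
      - single i j 1 * (single i i 1 - single j j 1) = (2 : F) • single i j (1 : F) := by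
    simp [sub_mul, mul_sub, single_mul_single_of_ne _ _ _ _ hij.symm, two_smul]
  have htr : (single i i 1 - single j j 1 : Matrix ι ι F).trace = 0 := by simp
  have hentry := congrFun (congrFun (hφ _ _ htr (trace_single_eq_of_ne i j 1 hij)) r) l
  rw [hcomm, map_smul] at hentry
  simp only [Matrix.smul_apply, Matrix.sub_apply, Matrix.mul_sub, mul_single_apply, mul_one,
    if_neg hl, smul_eq_mul] at hentry
  -- `hentry` now reads `2 x = -x` if `l = i` and `2 x = 0` otherwise
  by_cases hli : l = i
  · subst hli
    simp only [if_true] at hentry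
    exact (mul_eq_zero.mp (by linear_combination hentry : (3 : F) * _ = 0)).resolve_left h3
  · simp only [if_neg hli] at hentry
    exact (mul_eq_zero.mp (by linear_combination hentry : (2 : F) * _ = 0)).resolve_left h2

theorem apply_single_apply_eq {i j k : ι} (hik : i ≠ k) (hkj : k ≠ j) (hij : i ≠ j) (r : κ) :
    φ (single i j 1) r j = φ (single i k 1) r k := by
  have hcomm : single i k 1 * single k j 1 - single k j 1 * single i k (1 : F) = single i j 1 := by
    simp [single_mul_single_of_ne _ _ _ _ hij.symm]
  have hentry := congrFun (congrFun (hφ _ _ (trace_single_eq_of_ne i k 1 hik)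
    (trace_single_eq_of_ne k j 1 hkj)) r) j
  rw [hcomm] at hentry
  simpa [mul_single_apply, hkj.symm] using hentry

theorem exists_apply_single_eq_mul (h2 : (2 : F) ≠ 0) (h3 : (3 : F) ≠ 0) :
    ∃ X : Matrix κ ι F, ∀ i j, i ≠ j → φ (single i j 1) = X * single i j (1 : F) := by
  have hcol : ∀ i, ∃ x : κ → F, ∀ j, j ≠ i → ∀ r, φ (single i j 1) r j = x r := by
    intro i
    by_cases hk : ∃ k, k ≠ i
    · obtain ⟨k, hki⟩ := hk
      refine ⟨fun r => φ (single i k 1) r k, fun j hji r => ?_⟩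
      rcases eq_or_ne k j with rfl | hkj
      · rfl
      · exact apply_single_apply_eq hφ hki.symm hkj hji.symm r
    · exact ⟨0, fun j hji => absurd ⟨j, hji⟩ hk⟩
  choose x hx using hcol
  refine ⟨of fun r i => x i r, fun i j hij => ?_⟩
  ext r l
  rw [mul_single_apply]
  split_ifs with hl
  · rw [hl, hx i j hij.symm r, of_apply, mul_one]
  · exact apply_single_apply_of_ne hφ h2 h3 hij r hl

theorem apply_single_sub_single_eq_mul {X : Matrix κ ι F}
    (hX : ∀ i j, i ≠ j → φ (single i j 1) = X * single i j (1 : F)) (i j : ι) :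
    φ (single i i 1 - single j j 1) = X * (single i i 1 - single j j (1 : F)) := by
  rcases eq_or_ne i j with rfl | hij
  · simp
  have hcomm : single i j 1 * single j i 1 - single j i 1 * single i j (1 : F)
      = single i i 1 - single j j 1 := by
    simp
  rw [← hcomm, hφ _ _ (trace_single_eq_of_ne i j 1 hij) (trace_single_eq_of_ne j i 1 hij.symm),
    hX i j hij, hX j i hij.symm, Matrix.mul_assoc, Matrix.mul_assoc, ← Matrix.mul_sub]

end

theorem stmt6_general (F : Type*) [Field F] (h2 : ringChar F ≠ 2) (h3 : ringChar F ≠ 3)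
    (n m : ℕ)
    (φ : Matrix (Fin n) (Fin n) F →ₗ[F] Matrix (Fin m) (Fin n) F)
    (h : ∀ A B : Matrix (Fin n) (Fin n) F, A.trace = 0 → B.trace = 0 →
      φ (A * B - B * A) = φ A * B - φ B * A) :
    ∃ X : Matrix (Fin m) (Fin n) F,
      ∀ C : Matrix (Fin n) (Fin n) F, C.trace = 0 → φ C = X * C := by
  have h3' : (3 : F) ≠ 0 := fun h0 =>
    h3 (CharP.ringChar_of_prime_eq_zero Nat.prime_three (by exact_mod_cast h0))
  obtain ⟨X, hX⟩ := exists_apply_single_eq_mul h (Ring.two_ne_zero h2) h3'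
  refine ⟨X, fun C hC => ?_⟩
  have hspan := mem_span_single_of_trace_eq_zero hC
  clear hC
  induction hspan using Submodule.span_induction with
  | mem A hA =>
    rcases hA with ⟨i, j, hij, rfl⟩ | ⟨i, j, rfl⟩
    · exact hX i j hij
    · exact apply_single_sub_single_eq_mul h hX i j
  | zero => simp
  | add A B _ _ hA hB => rw [map_add, hA, hB, Matrix.mul_add]
  | smul c A _ hA => rw [map_smul, hA, Matrix.mul_smul]

theorem stmt6 (F : Type*) [Field F] (h2 : ringChar F ≠ 2) (h3 : ringChar F ≠ 3)
    (n m : ℕ) (hn : 1 ≤ n) (hm : 1 ≤ m)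
    (φ : Matrix (Fin n) (Fin n) F →ₗ[F] Matrix (Fin m) (Fin n) F)
    (h : ∀ A B : Matrix (Fin n) (Fin n) F, A.trace = 0 → B.trace = 0 →
      φ (A * B - B * A) = φ A * B - φ B * A) :
    ∃ X : Matrix (Fin m) (Fin n) F,
      ∀ C : Matrix (Fin n) (Fin n) F, C.trace = 0 → φ C = X * C :=
  stmt6_general F h2 h3 n m φ h
end

section
/- Let F be a field with characteristic 3. Define φ : sl_2(F) → M_2(F) by φ(E_{12}) = E_{21}, φ(E_{21}) = 0, and φ(H) = 0 where H = E_{11} − E_{22}. Then φ satisfies φ(AB − BA) = A·φ(B) − B·φ(A) for all A, B ∈ sl_2(F), yet there is no matrix X ∈ M_2(F) with φ(C) = C·X for all C ∈ sl_2(F). -/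
/-!
Writing a traceless `A` in the basis `E₁₂, E₂₁, H` shows that `φ A = a₁₂ • E₂₁`. The derivation
identity then reduces to a single entry: `[A, B]₁₂ = 2 (a₁₁ b₁₂ - a₁₂ b₁₁)`, while
`A φ B - B φ A` has `(2,1)` entry `-(a₁₁ b₁₂ - a₁₂ b₁₁)`, and `2 = -1` in characteristic `3`.
No `X` can work, since the second row of `E₁₂ * X` vanishes while `E₂₁` has a `1` there.
-/

namespace Matrix

variable {R : Type*} [CommRing R]

lemma eq_sl2_basis_combination_of_trace_eq_zero {A : Matrix (Fin 2) (Fin 2) R}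
    (hA : A.trace = 0) :
    A = A 0 1 • single 0 1 1 + A 1 0 • single 1 0 1 + A 0 0 • (single 0 0 1 - single 1 1 1) := by
  rw [trace_fin_two, add_eq_zero_iff_eq_neg'] at hA
  ext i j
  fin_cases i <;> fin_cases j <;> simp [hA]

lemma apply_eq_smul_single_of_trace_eq_zero
    (φ : Matrix (Fin 2) (Fin 2) R →ₗ[R] Matrix (Fin 2) (Fin 2) R)
    (h12 : φ (single 0 1 1) = single 1 0 1) (h21 : φ (single 1 0 1) = 0)
    (hH : φ (single 0 0 1 - single 1 1 1) = 0) (A : Matrix (Fin 2) (Fin 2) R)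
    (hA : A.trace = 0) :
    φ A = A 0 1 • single 1 0 1 := by
  conv_lhs => rw [eq_sl2_basis_combination_of_trace_eq_zero hA]
  simp only [map_add, map_smul, h12, h21, hH, smul_zero, add_zero]

lemma commutator_zero_one_smul_single_eq {A B : Matrix (Fin 2) (Fin 2) R}
    (h3 : (3 : R) = 0) (hA : A.trace = 0) (hB : B.trace = 0) :
    (A * B - B * A) 0 1 • single 1 0 1
      = A * (B 0 1 • single 1 0 1) - B * (A 0 1 • single 1 0 1) := by
  rw [trace_fin_two, add_eq_zero_iff_eq_neg'] at hA hB
  ext i j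
  fin_cases i <;> fin_cases j <;> simp [mul_apply, hA, hB]
  · ring
  · linear_combination (A 0 0 * B 0 1 - A 0 1 * B 0 0) * h3

lemma single_one_zero_ne_single_zero_one_mul [Nontrivial R] (X : Matrix (Fin 2) (Fin 2) R) :
    single 1 0 1 ≠ single 0 1 1 * X := by
  intro h
  simpa using congrFun₂ h 1 0

end Matrix

open Matrix in
theorem stmt7 (F : Type*) [Field F] [CharP F 3]
    (φ : Matrix (Fin 2) (Fin 2) F →ₗ[F] Matrix (Fin 2) (Fin 2) F)
    (h12 : φ (Matrix.single 0 1 1) = Matrix.single 1 0 1)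
    (h21 : φ (Matrix.single 1 0 1) = 0)
    (hH : φ (Matrix.single 0 0 1 - Matrix.single 1 1 1) = 0) :
    (∀ A B : Matrix (Fin 2) (Fin 2) F, A.trace = 0 → B.trace = 0 →
      φ (A * B - B * A) = A * φ B - B * φ A) ∧
    ¬ ∃ X : Matrix (Fin 2) (Fin 2) F,
        ∀ C : Matrix (Fin 2) (Fin 2) F, C.trace = 0 → φ C = C * X := by
  have hφ := apply_eq_smul_single_of_trace_eq_zero φ h12 h21 hH
  refine ⟨fun A B hA hB => ?_, fun ⟨X, hX⟩ => ?_⟩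
  · have hAB : (A * B - B * A).trace = 0 := by simp [trace_mul_comm A B]
    rw [hφ _ hAB, hφ A hA, hφ B hB]
    exact commutator_zero_one_smul_single_eq (CharP.cast_eq_zero F 3) hA hB
  · have h := hX (single 0 1 1) (by simp)
    rw [h12] at h
    exact single_one_zero_ne_single_zero_one_mul X h
end

section
/- Let F be a field and n ≥ 2, and fix 1 ≤ p < n. Let L = {(A B; 0 0)} ⊂ gl_n(F) be the Lie subalgebra of matrices with arbitrary p × p block A, arbitrary p × (n−p) block B, and zero bottom rows. Then the centralizer of L in gl_n(F) is exactly the scalar matrices F·I_n. -/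
namespace Matrix

variable {ι α : Type*} [Fintype ι] [DecidableEq ι] [Semiring α]

theorem eq_scalar_of_commute_single_row {M : Matrix ι ι α} (i : ι)
    (hM : ∀ j, Commute (single i j 1) M) : M = scalar ι (M i i) := by
  ext j k
  obtain rfl | hjk := eq_or_ne j k
  · simpa using (diag_eq_of_commute_single (hM j)).symm
  · simpa [hjk] using row_eq_zero_of_commute_single (hM j) hjk.symm

end Matrix

open Matrix in
theorem stmt12_general (F : Type*) [Field F] (n p : ℕ) (hp : 1 ≤ p) (hpn : p < n) :
    {X : Matrix (Fin n) (Fin n) F |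
      ∀ B : Matrix (Fin n) (Fin n) F,
        (∀ i j : Fin n, p ≤ (i : ℕ) → B i j = 0) → X * B = B * X} =
    {X : Matrix (Fin n) (Fin n) F | ∃ c : F, X = c • (1 : Matrix (Fin n) (Fin n) F)} := by
  ext X
  constructor
  · intro hX
    let i₀ : Fin n := ⟨0, by omega⟩
    have hsingle : ∀ j, Commute (single i₀ j 1) X := fun j =>
      (hX _ fun r _ hr =>
        single_apply_of_row_ne (Fin.ne_of_val_ne (by simp [i₀]; omega)) _ _ _).symm
    exact ⟨X i₀ i₀,
      (eq_scalar_of_commute_single_row i₀ hsingle).trans (smul_one_eq_diagonal _).symm⟩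
  · rintro ⟨c, rfl⟩ B -
    exact (Commute.one_left B).smul_left c

theorem stmt12 (F : Type*) [Field F] (n p : ℕ) (hn : 2 ≤ n) (hp : 1 ≤ p) (hpn : p < n) :
    {X : Matrix (Fin n) (Fin n) F |
      ∀ B : Matrix (Fin n) (Fin n) F,
        (∀ i j : Fin n, p ≤ (i : ℕ) → B i j = 0) → X * B = B * X} =
    {X : Matrix (Fin n) (Fin n) F | ∃ c : F, X = c • (1 : Matrix (Fin n) (Fin n) F)} :=
  stmt12_general F n p hp hpn
end

section
/- Let F be a field, n ≥ 3, and fix 1 < j ≤ i < n. Let L ⊂ gl_n(F) be the subspace of matrices whose only possibly nonzero blocks, with respect to the partition (j−1, i−j+1, n−i) of n, are the (1,2), (1,3), (2,2), and (2,3) blocks. Then the centralizer of L in gl_n(F) equals F·I_n + W, where W is the subspace of matrices whose only nonzero block is the (1,3) block. -/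
/-!
Write `L` for the matrices supported on the rows `R` and columns `C` (here `R = {r < i}` and
`C = {c ≥ j - 1}`), and `W` for those supported on the rows `Cᶜ` and columns `Rᶜ`. Since the
columns of `W` avoid the rows of `L` and the columns of `L` avoid the rows of `W`, both products
`W * L` and `L * W` vanish, so `F·1 + W` centralizes `L`. Conversely, a matrix commuting with every
matrix unit `E_rc` (`r ∈ R`, `c ∈ C`) of `L` has zero off-diagonal entries in the columns `R` and
in the rows `C`, and `X r r = X c c`. As `R ∪ C` covers all indices and `R ∩ C` is nonempty,
the diagonal is constant and the remaining off-diagonal entries lie in `Cᶜ × Rᶜ`.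
-/

namespace Matrix

variable {l m n α : Type*}

def supportedOn [Zero α] (R : Set m) (C : Set n) : Set (Matrix m n α) :=
  {B | ∀ r c, ¬(r ∈ R ∧ c ∈ C) → B r c = 0}

theorem single_mem_supportedOn [DecidableEq m] [DecidableEq n] [Zero α]
    {R : Set m} {C : Set n} {r : m} {c : n} (hr : r ∈ R) (hc : c ∈ C) (a : α) :
    single r c a ∈ supportedOn R C := by
  intro r' c' h
  rw [single_apply, if_neg]
  rintro ⟨rfl, rfl⟩
  exact h ⟨hr, hc⟩

theorem mul_eq_zero_of_supportedOn [Fintype n] [NonUnitalNonAssocSemiring α]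
    {R : Set l} {C S : Set n} {T : Set m} {A : Matrix l n α} {B : Matrix n m α}
    (hA : A ∈ supportedOn R C) (hB : B ∈ supportedOn S T) (hCS : Disjoint C S) : A * B = 0 := by
  ext p q
  rw [mul_apply, zero_apply]
  refine Finset.sum_eq_zero fun k _ => ?_
  by_cases hk : k ∈ C
  · rw [hB k q fun h => Set.disjoint_left.mp hCS hk h.1, mul_zero]
  · rw [hA p k fun h => hk h.2, zero_mul]

variable [Fintype n] [DecidableEq n] {R C : Set n}

theorem commute_smul_one_add_of_supportedOn [CommSemiring α] {B Y : Matrix n n α}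
    (hB : B ∈ supportedOn R C) (hY : Y ∈ supportedOn Cᶜ Rᶜ) (c : α) :
    Commute (c • 1 + Y) B := by
  refine ((Commute.one_left B).smul_left c).add_left ?_
  change Y * B = B * Y
  rw [mul_eq_zero_of_supportedOn hY hB disjoint_compl_left,
    mul_eq_zero_of_supportedOn hB hY disjoint_compl_right]

theorem sub_smul_one_mem_supportedOn_of_commute [CommRing α] {X : Matrix n n α}
    (hX : ∀ B ∈ supportedOn R C, Commute B X) (hcover : ∀ k, k ∈ R ∨ k ∈ C)
    {m : n} (hmR : m ∈ R) (hmC : m ∈ C) :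
    X - X m m • 1 ∈ supportedOn Cᶜ Rᶜ := by
  have hE : ∀ r ∈ R, ∀ c ∈ C, Commute (single r c 1) X :=
    fun r hr c hc => hX _ (single_mem_supportedOn hr hc 1)
  have hdiag : ∀ k, X k k = X m m := fun k => (hcover k).elim
    (fun hk => diag_eq_of_commute_single (hE k hk m hmC))
    (fun hk => (diag_eq_of_commute_single (hE m hmR k hk)).symm)
  intro r s hrs
  rcases eq_or_ne r s with rfl | hne
  · simp [hdiag]
  rw [sub_apply, smul_apply, one_apply_ne hne, smul_zero, sub_zero]
  by_cases hr : r ∈ C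
  · exact row_eq_zero_of_commute_single (hE m hmR r hr) hne.symm
  · have hs : s ∈ R := by_contra fun hs => hrs ⟨hr, hs⟩
    exact col_eq_zero_of_commute_single (hE s hs m hmC) hne

theorem centralizer_supportedOn [CommRing α] (hcover : ∀ k, k ∈ R ∨ k ∈ C)
    {m : n} (hmR : m ∈ R) (hmC : m ∈ C) :
    {X : Matrix n n α | ∀ B ∈ supportedOn R C, X * B = B * X} =
      {X | ∃ (c : α) (Y : Matrix n n α), Y ∈ supportedOn Cᶜ Rᶜ ∧ X = c • 1 + Y} := by
  ext X
  constructor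
  · intro hX
    exact ⟨X m m, _, sub_smul_one_mem_supportedOn_of_commute (fun B hB => (hX B hB).symm)
      hcover hmR hmC, (add_sub_cancel _ _).symm⟩
  · rintro ⟨c, Y, hY, rfl⟩ B hB
    exact commute_smul_one_add_of_supportedOn hB hY c

end Matrix

theorem stmt13_general (F : Type*) [Field F] (n i j : ℕ)
    (hj : 1 < j) (hji : j ≤ i) (hin : i < n) :
    {X : Matrix (Fin n) (Fin n) F |
      ∀ B : Matrix (Fin n) (Fin n) F,
        (∀ r c : Fin n, ¬((r : ℕ) < i ∧ j - 1 ≤ (c : ℕ)) → B r c = 0) →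
        X * B = B * X} =
    {X : Matrix (Fin n) (Fin n) F |
      ∃ (c : F) (Y : Matrix (Fin n) (Fin n) F),
        (∀ r s : Fin n, ¬((r : ℕ) < j - 1 ∧ i ≤ (s : ℕ)) → Y r s = 0) ∧
        X = c • (1 : Matrix (Fin n) (Fin n) F) + Y} := by
  have hcompl_cols : {c : Fin n | j - 1 ≤ (c : ℕ)}ᶜ = {r : Fin n | (r : ℕ) < j - 1} := by
    ext; simp only [Set.mem_compl_iff, Set.mem_ofPred_eq, not_le]
  have hcompl_rows : {r : Fin n | (r : ℕ) < i}ᶜ = {s : Fin n | i ≤ (s : ℕ)} := by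
    ext; simp only [Set.mem_compl_iff, Set.mem_ofPred_eq, not_lt]
  have hcover : ∀ k : Fin n, (k : ℕ) < i ∨ j - 1 ≤ (k : ℕ) := fun k => by omega
  have hcentralizer := Matrix.centralizer_supportedOn (α := F)
    (R := {r : Fin n | (r : ℕ) < i}) (C := {c | j - 1 ≤ (c : ℕ)}) hcover
    (m := ⟨j - 1, by omega⟩) (show j - 1 < i by omega) (show j - 1 ≤ j - 1 from le_rfl)
  rwa [hcompl_cols, hcompl_rows] at hcentralizer

theorem stmt13 (F : Type*) [Field F] (n i j : ℕ)
    (hn : 3 ≤ n) (hj : 1 < j) (hji : j ≤ i) (hin : i < n) :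
    {X : Matrix (Fin n) (Fin n) F |
      ∀ B : Matrix (Fin n) (Fin n) F,
        (∀ r c : Fin n, ¬((r : ℕ) < i ∧ j - 1 ≤ (c : ℕ)) → B r c = 0) →
        X * B = B * X} =
    {X : Matrix (Fin n) (Fin n) F |
      ∃ (c : F) (Y : Matrix (Fin n) (Fin n) F),
        (∀ r s : Fin n, ¬((r : ℕ) < j - 1 ∧ i ≤ (s : ℕ)) → Y r s = 0) ∧
        X = c • (1 : Matrix (Fin n) (Fin n) F) + Y} :=
  stmt13_general F n i j hj hji hin
end

section
/- Let F be a field with char(F) ≠ 2, and n ≥ 2, 1 ≤ p < n. Let L = {(A B; 0 0) : A ∈ M_p(F), B ∈ M_{p×(n−p)}(F)} ⊂ gl_n(F). Then every derivation f of the Lie algebra L is of the form f = ad(X)|_L for some block upper triangular matrix X = (X_{11} X_{12}; 0 X_{22}) ∈ gl_n(F). -/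
/-!
Let `E` be the diagonal idempotent of the row set `s`, so that `L = E * Mₙ`, and let
`N = {A ∈ L | A * E = 0}`. Testing the Lie identity of `f` on `E` against the matrix units of `N`
shows `Q = f E ∈ N`, and replacing `f` by `f + ad Q` achieves `f E = 0`. Then `f` commutes with
right multiplication by `E`, and expanding `f (A * B * C)` with `C ∈ N` in two ways shows that `f`
is even an associative derivation of `L`. Associative derivations of `L` are inner: the inner
matrix is read off from `f` on the matrix units `e i₀ r` of a row `i₀ ∈ s` and checked on
`e i j = e i i₀ * e i₀ j`.
-/

open Matrix

section Derivations

variable {M : Type*} [Ring M]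

def IsLieDerivationOn (S : Set M) (f : M → M) : Prop :=
  ∀ A ∈ S, ∀ B ∈ S, f (A * B - B * A) = (f A * B - B * f A) + (A * f B - f B * A)

def IsDerivationOn (S : Set M) (D : M → M) : Prop :=
  ∀ A ∈ S, ∀ B ∈ S, D (A * B) = D A * B + A * D B

variable {S : Set M} {f g : M → M}

theorem IsLieDerivationOn.add (hf : IsLieDerivationOn S f) (hg : IsLieDerivationOn S g) :
    IsLieDerivationOn S (f + g) := by
  intro A hA B hB
  simp only [Pi.add_apply, hf A hA B hB, hg A hA B hB, add_mul, mul_add]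
  abel

theorem isLieDerivationOn_commutator (X : M) :
    IsLieDerivationOn S (fun A => X * A - A * X) := by
  intro A _ B _
  noncomm_ring

end Derivations

namespace Matrix

variable {R ι : Type*} [CommRing R] {s : Set ι}

variable (R s) in
def rowSupported : Submodule R (Matrix ι ι R) where
  carrier := {A | ∀ i j, i ∉ s → A i j = 0}
  add_mem' hA hB i j hi := by simp [hA i j hi, hB i j hi]
  zero_mem' _ _ _ := rfl
  smul_mem' c A hA i j hi := by simp [hA i j hi]

theorem mem_rowSupported {A : Matrix ι ι R} :
    A ∈ rowSupported R s ↔ ∀ i j, i ∉ s → A i j = 0 := Iff.rfl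

variable [Fintype ι]

theorem mul_mem_rowSupported {A : Matrix ι ι R} (hA : A ∈ rowSupported R s)
    (B : Matrix ι ι R) : A * B ∈ rowSupported R s :=
  fun i j hi => by simp [mul_apply, hA i _ hi]

variable [DecidableEq ι]

theorem single_one_mul_apply (k l i j : ι) (M : Matrix ι ι R) :
    (single k l (1 : R) * M) i j = if i = k then M l j else 0 := by
  split_ifs with h
  · subst h; simp
  · exact single_mul_apply_of_ne _ _ _ _ _ h M

theorem mul_single_one_apply (k l i j : ι) (M : Matrix ι ι R) :
    (M * single k l (1 : R)) i j = if j = l then M i k else 0 := by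
  split_ifs with h
  · subst h; simp
  · exact mul_single_apply_of_ne _ _ _ _ _ h M

omit [Fintype ι] in
theorem single_mem_rowSupported {i : ι} (hi : i ∈ s) (j : ι) (c : R) :
    single i j c ∈ rowSupported R s := fun k l hk => by
  rw [single_apply_of_row_ne]; rintro rfl; exact hk hi

variable (R s) in
noncomputable def diagIndicator : Matrix ι ι R := diagonal (s.indicator 1)

theorem diagIndicator_mul {A : Matrix ι ι R} (hA : A ∈ rowSupported R s) :
    diagIndicator R s * A = A := by
  ext i j
  by_cases hi : i ∈ s
  · simp [diagIndicator, diagonal_mul, hi]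
  · simp [diagIndicator, diagonal_mul, hi, hA i j hi]

theorem mul_diagIndicator_apply_of_mem (M : Matrix ι ι R) (i : ι) {j : ι} (hj : j ∈ s) :
    (M * diagIndicator R s) i j = M i j := by
  simp [diagIndicator, mul_diagonal, hj]

theorem mul_diagIndicator_apply_of_notMem (M : Matrix ι ι R) (i : ι) {j : ι} (hj : j ∉ s) :
    (M * diagIndicator R s) i j = 0 := by
  simp [diagIndicator, mul_diagonal, hj]

theorem mul_diagIndicator_eq_zero_iff {M : Matrix ι ι R} :
    M * diagIndicator R s = 0 ↔ ∀ i, ∀ j ∈ s, M i j = 0 := by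
  refine ⟨fun h i j hj => ?_, fun h => ?_⟩
  · rw [← mul_diagIndicator_apply_of_mem M i hj, h, zero_apply]
  · ext i j
    by_cases hj : j ∈ s
    · rw [mul_diagIndicator_apply_of_mem M i hj, h i j hj, zero_apply]
    · rw [mul_diagIndicator_apply_of_notMem M i hj, zero_apply]

omit [Fintype ι] in
theorem diagIndicator_mem_rowSupported : diagIndicator R s ∈ rowSupported R s :=
  fun i j hi => by simp [diagIndicator, diagonal_apply, hi]

theorem diagIndicator_mul_self : diagIndicator R s * diagIndicator R s = diagIndicator R s :=
  diagIndicator_mul diagIndicator_mem_rowSupported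

theorem single_mul_diagIndicator {t : ι} (ht : t ∉ s) (k : ι) (c : R) :
    single k t c * diagIndicator R s = 0 :=
  mul_diagIndicator_eq_zero_iff.2 fun _ _ hj =>
    single_apply_of_col_ne _ _ (by rintro rfl; exact ht hj) _

theorem mul_eq_zero_of_mul_diagIndicator_eq_zero {A B : Matrix ι ι R}
    (hB : B * diagIndicator R s = 0) (hA : A ∈ rowSupported R s) : B * A = 0 := by
  rw [← diagIndicator_mul hA, ← mul_assoc, hB, zero_mul]

theorem eqOn_rowSupported_of_single {g h : Matrix ι ι R →ₗ[R] Matrix ι ι R}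
    (H : ∀ i j, i ∈ s → g (single i j 1) = h (single i j 1)) :
    Set.EqOn g h (rowSupported R s) := by
  intro A hA
  have hsingle : ∀ i j, g (single i j (A i j)) = h (single i j (A i j)) := by
    intro i j
    by_cases hi : i ∈ s
    · rw [← mul_one (A i j), ← smul_eq_mul, ← smul_single, map_smul, map_smul, H i j hi]
    · rw [hA i j hi, single_zero, map_zero, map_zero]
  rw [matrix_eq_sum_single A]
  simp only [map_sum, hsingle]

-- If `D = X * · - · * X` with `X i₀ i₀ = 0`, then row `i₀` of `D (single i₀ r 1)` is `-X r`.
def derivationMatrix (D : Matrix ι ι R →ₗ[R] Matrix ι ι R) (i₀ : ι) : Matrix ι ι R :=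
  of fun r t => -D (single i₀ r 1) i₀ t

section AssociativeDerivation

variable {D : Matrix ι ι R →ₗ[R] Matrix ι ι R} (hD : IsDerivationOn (rowSupported R s) D)
include hD

theorem IsDerivationOn.apply_single_self {i : ι} (hi : i ∈ s) : D (single i i 1) i i = 0 := by
  have hmem := single_mem_rowSupported (R := R) hi i 1
  have h := congrFun₂ (hD _ hmem _ hmem) i i
  simp only [single_mul_single_same, mul_one, add_apply, mul_single_one_apply,
    single_one_mul_apply, if_true] at h
  linear_combination -h

theorem IsDerivationOn.apply_single_add_apply_single {i₀ i : ι} (hi₀ : i₀ ∈ s) (hi : i ∈ s)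
    (r : ι) : D (single i₀ r 1) i₀ i + D (single i i₀ 1) r i₀ = 0 := by
  have h := congrFun₂
    (hD _ (single_mem_rowSupported hi₀ r 1) _ (single_mem_rowSupported hi i₀ 1)) i₀ i₀
  simp only [add_apply, mul_single_one_apply, single_one_mul_apply, if_true] at h
  rcases eq_or_ne r i with rfl | hri
  · rw [single_mul_single_same, mul_one, hD.apply_single_self hi₀] at h
    exact h.symm
  · rw [single_mul_single_of_ne 1 i₀ r i hri, map_zero, zero_apply] at h
    exact h.symm

theorem IsDerivationOn.derivationMatrix_apply_eq_zero
    (hDs : ∀ A ∈ rowSupported R s, D A ∈ rowSupported R s) {i₀ r t : ι} (hi₀ : i₀ ∈ s)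
    (hr : r ∉ s) (ht : t ∈ s) : derivationMatrix D i₀ r t = 0 := by
  have h := hD.apply_single_add_apply_single hi₀ ht r
  rw [hDs _ (single_mem_rowSupported ht i₀ 1) r i₀ hr, add_zero] at h
  rw [derivationMatrix, of_apply, h, neg_zero]

theorem IsDerivationOn.apply_single {i₀ i : ι} (hi₀ : i₀ ∈ s) (hi : i ∈ s) (j : ι) :
    D (single i j 1) =
      derivationMatrix D i₀ * single i j 1 - single i j 1 * derivationMatrix D i₀ := by
  have hfactor : single i j (1 : R) = single i i₀ 1 * single i₀ j 1 := by
    rw [single_mul_single_same, mul_one]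
  ext r t
  have hkey : D (single i i₀ 1) r i₀ = -D (single i₀ r 1) i₀ i :=
    eq_neg_of_add_eq_zero_right (hD.apply_single_add_apply_single hi₀ hi r)
  rw [hfactor, hD _ (single_mem_rowSupported hi i₀ 1) _ (single_mem_rowSupported hi₀ j 1),
    ← hfactor]
  simp only [add_apply, sub_apply, mul_single_one_apply, single_one_mul_apply, derivationMatrix,
    of_apply, hkey]
  split_ifs <;> ring

theorem IsDerivationOn.exists_eq_mul_sub_mul
    (hDs : ∀ A ∈ rowSupported R s, D A ∈ rowSupported R s) {i₀ : ι} (hi₀ : i₀ ∈ s) :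
    ∃ X : Matrix ι ι R, (∀ i j, i ∉ s → j ∈ s → X i j = 0) ∧
      ∀ A ∈ rowSupported R s, D A = X * A - A * X := by
  set X := derivationMatrix D i₀
  exact ⟨X, fun _ _ hi hj => hD.derivationMatrix_apply_eq_zero hDs hi₀ hi hj,
    eqOn_rowSupported_of_single (h := LinearMap.mulLeft R X - LinearMap.mulRight R X)
      fun i j hi => hD.apply_single hi₀ hi j⟩

end AssociativeDerivation

section LieDerivation

variable {f : Matrix ι ι R →ₗ[R] Matrix ι ι R}
  (hfs : ∀ A ∈ rowSupported R s, f A ∈ rowSupported R s)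
  (hf : IsLieDerivationOn (rowSupported R s) f)
include hfs hf

theorem IsLieDerivationOn.apply_diagIndicator_mul_diagIndicator {t : ι} (ht : t ∉ s) :
    f (diagIndicator R s) * diagIndicator R s = 0 := by
  refine mul_diagIndicator_eq_zero_iff.2 fun r k hk => ?_
  have hA := single_mem_rowSupported (R := R) hk t 1
  have h := congrFun₂ (hf _ diagIndicator_mem_rowSupported _ hA) r t
  rw [diagIndicator_mul hA, single_mul_diagIndicator ht, sub_zero,
    diagIndicator_mul (hfs _ hA)] at h
  simp only [add_apply, sub_apply, mul_single_one_apply, single_one_mul_apply, if_true,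
    mul_diagIndicator_apply_of_notMem _ _ ht,
    hfs _ diagIndicator_mem_rowSupported t t ht, ite_self] at h
  linear_combination -h

variable (hE : f (diagIndicator R s) = 0)
include hE

theorem IsLieDerivationOn.map_mul_diagIndicator {A : Matrix ι ι R}
    (hA : A ∈ rowSupported R s) : f (A * diagIndicator R s) = f A * diagIndicator R s := by
  have h := hf _ diagIndicator_mem_rowSupported _ hA
  rw [hE, zero_mul, mul_zero, sub_zero, zero_add, diagIndicator_mul hA,
    diagIndicator_mul (hfs A hA), map_sub] at h
  exact sub_right_injective h

theorem IsLieDerivationOn.map_mul_of_mul_diagIndicator_eq_zero {A B : Matrix ι ι R}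
    (hA : A ∈ rowSupported R s) (hB : B ∈ rowSupported R s) (hBE : B * diagIndicator R s = 0) :
    f (A * B) = f A * B + A * f B := by
  have hfBE : f B * diagIndicator R s = 0 := by
    rw [← hf.map_mul_diagIndicator hfs hE hB, hBE, map_zero]
  have h := hf A hA B hB
  rwa [mul_eq_zero_of_mul_diagIndicator_eq_zero hBE hA,
    mul_eq_zero_of_mul_diagIndicator_eq_zero hBE (hfs A hA),
    mul_eq_zero_of_mul_diagIndicator_eq_zero hfBE hA, sub_zero, sub_zero, sub_zero] at h

theorem IsLieDerivationOn.map_mul_of_mul_diagIndicator_eq_self {t : ι} (ht : t ∉ s)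
    {A B : Matrix ι ι R} (hA : A ∈ rowSupported R s) (hB : B ∈ rowSupported R s)
    (hBE : B * diagIndicator R s = B) : f (A * B) = f A * B + A * f B := by
  rw [← sub_eq_zero, sub_add_eq_sub_sub]
  -- Expanding `f (A * B * C)` in two ways for `C = single k t 1` shows `K * C = 0`.
  set K := f (A * B) - f A * B - A * f B
  have hK : ∀ k ∈ s, ∀ r, K r k = 0 := by
    intro k hk r
    have hC := single_mem_rowSupported (R := R) hk t 1
    have hCE := single_mul_diagIndicator (R := R) ht k 1
    have hBC : B * single k t 1 * diagIndicator R s = 0 := by rw [mul_assoc, hCE, mul_zero]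
    have h₁ := hf.map_mul_of_mul_diagIndicator_eq_zero hfs hE hA
      (mul_mem_rowSupported hB _) hBC
    have h₂ := hf.map_mul_of_mul_diagIndicator_eq_zero hfs hE
      (mul_mem_rowSupported hA B) hC hCE
    have h₃ := hf.map_mul_of_mul_diagIndicator_eq_zero hfs hE hB hC hCE
    have hKC : K * single k t 1 = 0 := by
      rw [h₃] at h₁
      rw [mul_assoc A B, h₁] at h₂
      simp only [K, sub_mul, eq_sub_of_add_eq h₂.symm]
      noncomm_ring
    simpa using congrFun₂ hKC r t
  have hKE : K * diagIndicator R s = K := by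
    simp only [K, sub_mul, mul_assoc, hBE, ← hf.map_mul_diagIndicator hfs hE hB,
      ← hf.map_mul_diagIndicator hfs hE (mul_mem_rowSupported hA B)]
  ext r k
  by_cases hk : k ∈ s
  · exact hK k hk r
  · rw [← hKE, mul_diagIndicator_apply_of_notMem _ _ hk, zero_apply]

theorem IsLieDerivationOn.isDerivationOn {t : ι} (ht : t ∉ s) :
    IsDerivationOn (rowSupported R s) f := by
  intro A hA B hB
  have hB₁ : B * diagIndicator R s ∈ rowSupported R s := mul_mem_rowSupported hB _
  have hB₂ : B - B * diagIndicator R s ∈ rowSupported R s := sub_mem hB hB₁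
  have hB₁E : B * diagIndicator R s * diagIndicator R s = B * diagIndicator R s := by
    rw [mul_assoc, diagIndicator_mul_self]
  have hB₂E : (B - B * diagIndicator R s) * diagIndicator R s = 0 := by
    rw [sub_mul, hB₁E, sub_self]
  have hsplit : B = B * diagIndicator R s + (B - B * diagIndicator R s) := by abel
  rw [hsplit, mul_add, map_add, map_add,
    hf.map_mul_of_mul_diagIndicator_eq_self hfs hE ht hA hB₁ hB₁E,
    hf.map_mul_of_mul_diagIndicator_eq_zero hfs hE hA hB₂ hB₂E]
  noncomm_ring

end LieDerivation

theorem exists_eq_mul_sub_mul_of_isLieDerivationOn {f : Matrix ι ι R →ₗ[R] Matrix ι ι R}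
    (hfs : ∀ A ∈ rowSupported R s, f A ∈ rowSupported R s)
    (hf : IsLieDerivationOn (rowSupported R s) f) {i₀ t : ι} (hi₀ : i₀ ∈ s) (ht : t ∉ s) :
    ∃ X : Matrix ι ι R, (∀ i j, i ∉ s → j ∈ s → X i j = 0) ∧
      ∀ A ∈ rowSupported R s, f A = X * A - A * X := by
  set Q := f (diagIndicator R s)
  have hQ : Q ∈ rowSupported R s := hfs _ diagIndicator_mem_rowSupported
  have hQE : Q * diagIndicator R s = 0 := hf.apply_diagIndicator_mul_diagIndicator hfs ht
  set D := f + (LinearMap.mulLeft R Q - LinearMap.mulRight R Q)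
  have hDapply : ∀ A, D A = f A + (Q * A - A * Q) := fun _ => rfl
  have hDs : ∀ A ∈ rowSupported R s, D A ∈ rowSupported R s := fun A hA => by
    rw [hDapply]
    exact add_mem (hfs A hA) (sub_mem (mul_mem_rowSupported hQ A) (mul_mem_rowSupported hA Q))
  have hD : IsLieDerivationOn (rowSupported R s) D := by
    convert hf.add (isLieDerivationOn_commutator Q) using 1
    exact funext hDapply
  have hDE : D (diagIndicator R s) = 0 := by
    rw [hDapply, hQE, diagIndicator_mul hQ]
    abel
  obtain ⟨X, hX, hDX⟩ := (hD.isDerivationOn hDs hDE ht).exists_eq_mul_sub_mul hDs hi₀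
  refine ⟨X - Q, fun i j hi hj => by rw [sub_apply, hX i j hi hj, hQ i j hi, sub_zero],
    fun A hA => ?_⟩
  rw [eq_sub_of_add_eq ((hDapply A).symm.trans (hDX A hA)), sub_mul, mul_sub]
  abel

end Matrix

theorem stmt14_general (F : Type*) [Field F]
    (n p : ℕ) (hp : 1 ≤ p) (hpn : p < n)
    (f : Matrix (Fin n) (Fin n) F →ₗ[F] Matrix (Fin n) (Fin n) F)
    (hmap : ∀ A : Matrix (Fin n) (Fin n) F,
      (∀ i j : Fin n, p ≤ (i : ℕ) → A i j = 0) →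
      ∀ i j : Fin n, p ≤ (i : ℕ) → f A i j = 0)
    (hder : ∀ A B : Matrix (Fin n) (Fin n) F,
      (∀ i j : Fin n, p ≤ (i : ℕ) → A i j = 0) →
      (∀ i j : Fin n, p ≤ (i : ℕ) → B i j = 0) →
      f (A * B - B * A) = (f A * B - B * f A) + (A * f B - f B * A)) :
    ∃ X : Matrix (Fin n) (Fin n) F,
      (∀ i j : Fin n, p ≤ (i : ℕ) → (j : ℕ) < p → X i j = 0) ∧
      ∀ A : Matrix (Fin n) (Fin n) F,
        (∀ i j : Fin n, p ≤ (i : ℕ) → A i j = 0) → f A = X * A - A * X := by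
  have hmem : ∀ A : Matrix (Fin n) (Fin n) F,
      A ∈ rowSupported F {i : Fin n | (i : ℕ) < p} ↔
        ∀ i j : Fin n, p ≤ (i : ℕ) → A i j = 0 := by
    simp [mem_rowSupported]
  obtain ⟨X, hX, hfX⟩ := exists_eq_mul_sub_mul_of_isLieDerivationOn (f := f)
    (fun A hA => (hmem _).2 (hmap A ((hmem A).1 hA)))
    (fun A hA B hB => hder A B ((hmem A).1 hA) ((hmem B).1 hB))
    (i₀ := ⟨0, by omega⟩) (t := ⟨p, hpn⟩) (show 0 < p by omega) (lt_irrefl p)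
  exact ⟨X, fun i j hi hj => hX i j (not_lt.2 hi) hj,
    fun A hA => hfX A ((hmem A).2 hA)⟩

theorem stmt14 (F : Type*) [Field F] (hchar : ringChar F ≠ 2)
    (n p : ℕ) (hn : 2 ≤ n) (hp : 1 ≤ p) (hpn : p < n)
    (f : Matrix (Fin n) (Fin n) F →ₗ[F] Matrix (Fin n) (Fin n) F)
    (hmap : ∀ A : Matrix (Fin n) (Fin n) F,
      (∀ i j : Fin n, p ≤ (i : ℕ) → A i j = 0) →
      ∀ i j : Fin n, p ≤ (i : ℕ) → f A i j = 0)
    (hder : ∀ A B : Matrix (Fin n) (Fin n) F,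
      (∀ i j : Fin n, p ≤ (i : ℕ) → A i j = 0) →
      (∀ i j : Fin n, p ≤ (i : ℕ) → B i j = 0) →
      f (A * B - B * A) = (f A * B - B * f A) + (A * f B - f B * A)) :
    ∃ X : Matrix (Fin n) (Fin n) F,
      (∀ i j : Fin n, p ≤ (i : ℕ) → (j : ℕ) < p → X i j = 0) ∧
      ∀ A : Matrix (Fin n) (Fin n) F,
        (∀ i j : Fin n, p ≤ (i : ℕ) → A i j = 0) → f A = X * A - A * X :=
  stmt14_general F n p hp hpn f hmap hder
end

section
/- Let F be a field with char(F) ≠ 2 and n ≥ 1. Every derivation f of the Lie algebra gl_n(F) has the form f(A) = [X, A] + c·tr(A)·I_n for some X ∈ gl_n(F) and c ∈ F. -/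
/-! Write `E i j` for `single i j 1` and fix an index `o`. Subtracting a suitable
`ad X + c • (A ↦ tr A • 1)` from a derivation `D`, we may assume that column `o` of
`D (E q o)` vanishes for every `q`. The Leibniz rule on `[E q o, E o o] = E q o` then forces
`D (E q o) = 0` (this is where `2` is cancelled), and a few more brackets of matrix units give
`D (E o j) = 0`. Since `[E i o, E o j] = E i j - δ i j • E o o`, `D` kills every matrix unit,
hence `D = 0`. -/

open Matrix

attribute [local instance] LieRing.ofAssociativeRing

namespace Matrix

variable {ι R : Type*} [Fintype ι] [DecidableEq ι] [CommRing R]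

lemma single_one_lie_apply (i j p q : ι) (M : Matrix ι ι R) :
    ⁅single i j (1 : R), M⁆ p q =
      (if p = i then M j q else 0) - (if q = j then M p i else 0) := by
  rw [Ring.lie_def, sub_apply]
  congr 1
  · split_ifs with h
    · rw [h, single_mul_apply_same, one_mul]
    · exact single_mul_apply_of_ne (h := h) ..
  · split_ifs with h
    · rw [h, mul_single_apply_same, mul_one]
    · exact mul_single_apply_of_ne (hbj := h) ..

lemma lie_single_one_apply (M : Matrix ι ι R) (i j p q : ι) :
    ⁅M, single i j (1 : R)⁆ p q =
      (if q = j then M p i else 0) - (if p = i then M j q else 0) := by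
  rw [← lie_skew, neg_apply, single_one_lie_apply, neg_sub]

lemma single_one_lie_single_one (i j k l : ι) :
    ⁅single i j (1 : R), single k l (1 : R)⁆ =
      (if j = k then single i l 1 else 0) - (if l = i then single k j 1 else 0) := by
  rw [Ring.lie_def]
  congr 1
  · split_ifs with h
    · rw [h, single_mul_single_same, one_mul]
    · exact single_mul_single_of_ne (h := h) ..
  · split_ifs with h
    · rw [h, single_mul_single_same, one_mul]
    · exact single_mul_single_of_ne (h := h) ..

variable (ι R) in
def traceDerivation : LieDerivation R (Matrix ι ι R) (Matrix ι ι R) where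
  toLinearMap := (traceLinearMap ι R R).smulRight 1
  leibniz' a b := by
    simp [Ring.lie_def, trace_mul_comm a b]

lemma traceDerivation_apply (A : Matrix ι ι R) : traceDerivation ι R A = A.trace • 1 := rfl

end Matrix

lemma IsLeftRegular.eq_zero_of_eq_neg {R : Type*} [CommRing R] (h2 : IsLeftRegular (2 : R)) {x : R}
    (h : x = -x) : x = 0 :=
  h2 (show 2 * x = 2 * 0 by linear_combination h)

namespace LieDerivation

variable {ι R : Type*} [Fintype ι] [DecidableEq ι] [CommRing R]
  (D : LieDerivation R (Matrix ι ι R) (Matrix ι ι R)) {o : ι}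

lemma apply_single_one_same_eq_zero (hD : ∀ p q, D (single q o 1) p o = 0) :
    D (single o o 1) = 0 := by
  ext p q
  by_cases hqo : q = o
  · rw [hqo]; exact hD p o
  · have h := congr_fun₂ (D.apply_lie_eq_sub (single q o 1) (single o o 1)) p o
    simpa [single_one_lie_single_one, Ne.symm hqo, single_one_lie_apply, hD] using h.symm

lemma apply_single_one_col_eq_zero (hD : ∀ p q, D (single q o 1) p o = 0)
    (h2 : IsLeftRegular (2 : R)) (q : ι) : D (single q o 1) = 0 := by
  by_cases hqo : q = o
  · rw [hqo]; exact D.apply_single_one_same_eq_zero hD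
  ext p r
  by_cases hro : r = o
  · rw [hro]; exact hD p q
  have h := congr_fun₂ (D.apply_lie_eq_sub (single q o 1) (single o o 1)) p r
  simp only [single_one_lie_single_one, ↓reduceIte, Ne.symm hqo, sub_zero,
    D.apply_single_one_same_eq_zero hD, lie_zero, Matrix.sub_apply, Matrix.zero_apply,
    single_one_lie_apply, hro, zero_sub] at h
  rw [Matrix.zero_apply]
  split_ifs at h with hpo
  · rw [hpo] at h ⊢
    exact h2.eq_zero_of_eq_neg h
  · simpa using h

lemma apply_single_one_row_apply_eq_zero (hD : ∀ p q, D (single q o 1) p o = 0)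
    (h2 : IsLeftRegular (2 : R)) (j p r : ι) (hpr : p ≠ o ∨ r = o) :
    D (single o j 1) p r = 0 := by
  by_cases hjo : j = o
  · rw [hjo, D.apply_single_one_same_eq_zero hD, Matrix.zero_apply]
  have h := congr_fun₂ (D.apply_lie_eq_sub (single o o 1) (single o j 1)) p r
  simp only [single_one_lie_single_one, ↓reduceIte, hjo, sub_zero,
    D.apply_single_one_same_eq_zero hD, lie_zero, Matrix.sub_apply, single_one_lie_apply,
    Matrix.zero_apply] at h
  rcases hpr with hpo | hro
  · simp only [hpo, if_false, zero_sub] at h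
    split_ifs at h with hro
    · rw [hro] at h ⊢; exact h2.eq_zero_of_eq_neg h
    · simpa using h
  · rw [hro] at h ⊢
    by_cases hpo : p = o
    · rw [hpo] at h ⊢; simpa using h
    · simp only [hpo, if_false, if_true, zero_sub] at h
      exact h2.eq_zero_of_eq_neg h

lemma apply_single_one_diag_eq_lie (hD : ∀ p q, D (single q o 1) p o = 0)
    (h2 : IsLeftRegular (2 : R)) (k : ι) :
    D (single k k 1) = ⁅single k o (1 : R), D (single o k 1)⁆ := by
  have h := D.apply_lie_eq_sub (single k o 1) (single o k 1)
  simpa [single_one_lie_single_one, D.apply_single_one_same_eq_zero hD,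
    D.apply_single_one_col_eq_zero hD h2] using h

lemma apply_single_one_row_eq_zero (hD : ∀ p q, D (single q o 1) p o = 0)
    (h2 : IsLeftRegular (2 : R)) (j : ι) : D (single o j 1) = 0 := by
  ext p r
  by_cases hpr : p ≠ o ∨ r = o
  · exact D.apply_single_one_row_apply_eq_zero hD h2 j p r hpr
  push Not at hpr
  obtain ⟨rfl, hro⟩ := hpr
  by_cases hrj : r = j
  · subst hrj
    have h := congr_fun₂ (D.apply_lie_eq_sub (single r r 1) (single p r 1)) p r
    simp only [single_one_lie_single_one, hro, hro.symm, ↓reduceIte, zero_sub, sub_zero, map_neg,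
      Matrix.neg_apply, D.apply_single_one_diag_eq_lie hD h2, Matrix.sub_apply,
      single_one_lie_apply, sub_neg_eq_add] at h
    exact h2 (show 2 * D (single p r 1) p r = 2 * 0 by linear_combination h)
  · have h := congr_fun₂ (D.apply_lie_eq_sub (single r r 1) (single p j 1)) p r
    simp only [single_one_lie_single_one, hro, hro.symm, hrj, Ne.symm hrj, ↓reduceIte, sub_self,
      map_zero, Matrix.zero_apply, D.apply_single_one_diag_eq_lie hD h2, Matrix.sub_apply,
      single_one_lie_apply, zero_sub, sub_zero, zero_eq_neg] at h
    exact h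

lemma eq_zero_of_apply_single_one_eq_zero (h : ∀ i j, D (single i j 1) = 0) : D = 0 := by
  ext A : 1
  have hA : ∀ i j, single i j (A i j) = A i j • single i j 1 := by
    intro i j; rw [smul_single, smul_eq_mul, mul_one]
  rw [matrix_eq_sum_single A]
  simp only [hA, map_sum, map_smul, h, smul_zero, Finset.sum_const_zero, LieDerivation.zero_apply]

theorem eq_zero_of_apply_single_one_col_apply_col_eq_zero
    (hD : ∀ p q, D (single q o 1) p o = 0) (h2 : IsLeftRegular (2 : R)) : D = 0 := by
  refine D.eq_zero_of_apply_single_one_eq_zero fun i j => ?_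
  have h := D.apply_lie_eq_sub (single i o 1) (single o j 1)
  rw [single_one_lie_single_one, if_pos rfl, D.map_sub, D.apply_single_one_col_eq_zero hD h2,
    D.apply_single_one_row_eq_zero hD h2] at h
  split_ifs at h with hji
  · simpa [hji, D.apply_single_one_same_eq_zero hD] using h
  · simpa using h

theorem exists_eq_ad_add_smul_traceDerivation [Nonempty ι] (h2 : IsLeftRegular (2 : R)) :
    ∃ (X : Matrix ι ι R) (c : R), D = ad R _ X + c • traceDerivation ι R := by
  obtain ⟨o⟩ := ‹Nonempty ι›
  -- If `D = ad Y + c • traceDerivation`, then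
  -- `D (E q o) p o = Y p q - δ p q • Y o o + c • δ p o • δ q o`.
  let c := D (single o o 1) o o
  let X := of (fun p q => D (single q o 1) p o) - single o o c
  refine ⟨X, c, sub_eq_zero.mp ?_⟩
  refine eq_zero_of_apply_single_one_col_apply_col_eq_zero (o := o) _ (fun p q => ?_) h2
  by_cases hq : q = o <;> by_cases hp : p = o <;>
    simp [X, c, traceDerivation_apply, lie_single_one_apply, trace_single_eq_of_ne, one_apply,
      hp, hq, eq_comm (a := o)]

end LieDerivation

theorem stmt15 (F : Type*) [Field F] (hchar : ringChar F ≠ 2) (n : ℕ) (hn : 1 ≤ n)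
    (f : Matrix (Fin n) (Fin n) F →ₗ[F] Matrix (Fin n) (Fin n) F)
    (hder : ∀ A B : Matrix (Fin n) (Fin n) F,
      f (A * B - B * A) = (f A * B - B * f A) + (A * f B - f B * A)) :
    ∃ (X : Matrix (Fin n) (Fin n) F) (c : F),
      ∀ A : Matrix (Fin n) (Fin n) F,
        f A = (X * A - A * X) + (c * A.trace) • (1 : Matrix (Fin n) (Fin n) F) := by
  have : Nonempty (Fin n) := ⟨⟨0, hn⟩⟩
  let D : LieDerivation F (Matrix (Fin n) (Fin n) F) (Matrix (Fin n) (Fin n) F) :=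
    { toLinearMap := f
      leibniz' := fun A B => by simp only [Ring.lie_def, hder]; abel }
  obtain ⟨X, c, hD⟩ := D.exists_eq_ad_add_smul_traceDerivation
    (Ring.two_ne_zero hchar).isUnit.isRegular.left
  refine ⟨X, c, fun A => ?_⟩
  simpa [D, Ring.lie_def, traceDerivation_apply, smul_smul] using LieDerivation.congr_fun hD A
end

section
/- Let F be a field of characteristic 3, n = 4, and let L ⊂ gl_4(F) be the Lie algebra spanned by E_{11} − E_{22}, E_{12}, E_{13}, E_{14}, E_{21}, E_{23}, E_{24} (traceless matrices supported in the first two rows, with the lower-left 2×2 block having only the (2,1) entry). Then the linear map f determined by f(E_{12}) = E_{24} and f(E) = 0 on the other six basis elements is a derivation of L, but there is no X ∈ gl_4(F) with f(E_{12}) = [X, E_{12}]. -/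
/-!
On `L` the map `f` is `A ↦ A₁₂ • E₂₄`. Since `E₂₄ L = 0` and `L E₂₄` only sees column 2, the
derivation identity reduces to `[A, B]₁₂ = 2 (A₁₁ B₁₂ - A₁₂ B₁₁)` agreeing with
`A₁₂ B₁₁ - A₁₁ B₁₂`, which is exactly `3 = 0`.
It is not inner because every commutator `[X, E₁₂]` vanishes outside row 1 and column 2,
while `E₂₄` does not.
-/

/-- Membership in the span of E₁₁−E₂₂, E₁₂, E₁₃, E₁₄, E₂₁, E₂₃, E₂₄ (1-based indices):
rows 3,4 are zero and the diagonal is traceless. -/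
def inL4 {F : Type*} [Field F] (A : Matrix (Fin 4) (Fin 4) F) : Prop :=
  (∀ c : Fin 4, A 2 c = 0 ∧ A 3 c = 0) ∧ A 1 1 = -A 0 0

open Matrix

theorem Matrix.commutator_single_apply_of_ne {R n : Type*} [Ring R] [Fintype n] [DecidableEq n]
    (X : Matrix n n R) {i j k l : n} (hk : k ≠ i) (hl : l ≠ j) (c : R) :
    (X * single i j c - single i j c * X) k l = 0 := by
  rw [sub_apply, mul_single_apply_of_ne _ _ _ _ _ hl, single_mul_apply_of_ne _ _ _ _ _ hk,
    sub_zero]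

section InL4

variable {F : Type*} [Field F] {A B : Matrix (Fin 4) (Fin 4) F}

theorem eq_sum_single_of_inL4 (hA : inL4 A) :
    A = A 0 0 • (single 0 0 1 - single 1 1 1) + A 0 1 • single 0 1 1 + A 0 2 • single 0 2 1
      + A 0 3 • single 0 3 1 + A 1 0 • single 1 0 1 + A 1 2 • single 1 2 1
      + A 1 3 • single 1 3 1 := by
  obtain ⟨hrows, hdiag⟩ := hA
  ext i j
  fin_cases i <;> fin_cases j <;> simp_all [single]

theorem inL4_smul_single_one_three (c : F) : inL4 (c • single 1 3 1 : Matrix (Fin 4) (Fin 4) F) :=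
  ⟨fun _ => by simp [single], by simp [single]⟩

theorem inL4_commutator (hA : inL4 A) (hB : inL4 B) : inL4 (A * B - B * A) := by
  obtain ⟨hAr, hAd⟩ := hA
  obtain ⟨hBr, hBd⟩ := hB
  refine ⟨fun c => ⟨?_, ?_⟩, ?_⟩ <;>
    simp [mul_apply, Fin.sum_univ_four, hAr, hBr, hAd, hBd]
  ring

theorem commutator_apply_zero_one_of_inL4 (hA : inL4 A) (hB : inL4 B) :
    (A * B - B * A) 0 1 = 2 * (A 0 0 * B 0 1 - A 0 1 * B 0 0) := by
  obtain ⟨hAr, hAd⟩ := hA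
  obtain ⟨hBr, hBd⟩ := hB
  simp [mul_apply, Fin.sum_univ_four, hAr, hBr, hAd, hBd]
  ring

theorem single_one_three_mul_of_inL4 (hB : inL4 B) : single 1 3 (1 : F) * B = 0 := by
  rw [single_mul_eq_updateRow_zero]
  ext i j
  simp [updateRow_apply, (hB.1 j).2]

theorem mul_single_one_three_of_inL4 (hA : inL4 A) :
    A * single 1 3 1 = A 0 1 • single 0 3 1 + A 1 1 • single 1 3 1 := by
  ext i j
  fin_cases i <;> fin_cases j <;> simp [mul_apply, single, (hA.1 _).1, (hA.1 _).2]

theorem commutator_smul_single_one_three [CharP F 3] (hA : inL4 A) (hB : inL4 B) :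
    (A * B - B * A) 0 1 • single 1 3 1
      = (A 0 1 • single 1 3 1 * B - B * (A 0 1 • single 1 3 1))
        + (A * (B 0 1 • single 1 3 1) - (B 0 1 • single 1 3 1) * A) := by
  have h2 : (2 : F) = -1 := by
    linear_combination (CharP.cast_eq_zero F 3 : ((3 : ℕ) : F) = 0)
  rw [smul_mul_assoc, mul_smul_comm, mul_smul_comm, smul_mul_assoc,
    single_one_three_mul_of_inL4 hA, single_one_three_mul_of_inL4 hB,
    mul_single_one_three_of_inL4 hA, mul_single_one_three_of_inL4 hB,
    commutator_apply_zero_one_of_inL4 hA hB, hA.2, hB.2, h2]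
  module

theorem apply_eq_smul_of_inL4 (f : Matrix (Fin 4) (Fin 4) F →ₗ[F] Matrix (Fin 4) (Fin 4) F)
    (M : Matrix (Fin 4) (Fin 4) F) (h12 : f (single 0 1 1) = M)
    (hH : f (single 0 0 1 - single 1 1 1) = 0) (h13 : f (single 0 2 1) = 0)
    (h14 : f (single 0 3 1) = 0) (h21 : f (single 1 0 1) = 0) (h23 : f (single 1 2 1) = 0)
    (h24 : f (single 1 3 1) = 0) (hA : inL4 A) :
    f A = A 0 1 • M := by
  conv_lhs => rw [eq_sum_single_of_inL4 hA]
  simp only [map_add, map_smul, h12, hH, h13, h14, h21, h23, h24, smul_zero, add_zero, zero_add]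

end InL4

theorem stmt18 (F : Type*) [Field F] [CharP F 3]
    (f : Matrix (Fin 4) (Fin 4) F →ₗ[F] Matrix (Fin 4) (Fin 4) F)
    (h12 : f (Matrix.single 0 1 1) = Matrix.single 1 3 1)
    (hH : f (Matrix.single 0 0 1 - Matrix.single 1 1 1) = 0)
    (h13 : f (Matrix.single 0 2 1) = 0)
    (h14 : f (Matrix.single 0 3 1) = 0)
    (h21 : f (Matrix.single 1 0 1) = 0)
    (h23 : f (Matrix.single 1 2 1) = 0)
    (h24 : f (Matrix.single 1 3 1) = 0) :
    (∀ A : Matrix (Fin 4) (Fin 4) F, inL4 A → inL4 (f A)) ∧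
    (∀ A B : Matrix (Fin 4) (Fin 4) F, inL4 A → inL4 B →
      f (A * B - B * A) = (f A * B - B * f A) + (A * f B - f B * A)) ∧
    ¬ ∃ X : Matrix (Fin 4) (Fin 4) F,
        f (Matrix.single 0 1 1) =
          X * Matrix.single 0 1 1 - Matrix.single 0 1 1 * X := by
  have hf : ∀ A, inL4 A → f A = A 0 1 • single 1 3 1 := fun A hA =>
    apply_eq_smul_of_inL4 f _ h12 hH h13 h14 h21 h23 h24 hA
  refine ⟨fun A hA => ?_, fun A B hA hB => ?_, ?_⟩
  · rw [hf A hA]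
    exact inL4_smul_single_one_three _
  · rw [hf _ (inL4_commutator hA hB), hf A hA, hf B hB]
    exact commutator_smul_single_one_three hA hB
  · rintro ⟨X, hX⟩
    have hentry := congrFun (congrFun hX 1) 3
    rw [h12, commutator_single_apply_of_ne X (by decide) (by decide)] at hentry
    simp at hentry
end

section
/- Let F be a field with char(F) ≠ 2, let n ≥ 2 and let b ⊂ gl_n(F) be the Lie algebra of upper triangular n × n matrices. Then every derivation f of b has the form f(A) = [X, A] + μ(A)·I_n, where X ∈ b and μ : b → F is a linear functional vanishing on [b, b] (equivalently, μ(A) = ∑_{k=1}^n c_k a_{kk} for some constants c_k ∈ F with the restriction μ([b,b]) = 0). -/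
/-!
Write `E i j` for `single i j 1`. Subtracting the inner derivation `ad X`, where the `q`-th column
of `X` is that of `f (E q q)`, makes every `f (E k k)` diagonal; this is the `(p, q)` entry of
`0 = f ⁅E k k, E q q⁆ = ⁅f (E k k), E q q⁆ + ⁅E k k, f (E q q)⁆`. For the remaining derivation `g`,
bracketing with `E k k = diagonal (Pi.single k 1)` multiplies the `(p, q)` entry by the weight
`δ k p - δ k q`. Comparing weights in `⁅E k k, E i j⁆ = (δ k i - δ k j) • E i j` shows that
`g (E k k)` is a scalar `c k • 1` and that `g (E i j) = λ i j • E i j` for `i < j`; then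
`⁅E i j, E j k⁆ = E i k` makes `λ` additive along chains, so `λ i j = t j - t i`, and subtracting
`ad (diagonal (-t))` leaves the map `A ↦ (∑ k, c k * A k k) • 1`.
-/

open Matrix

namespace Matrix

variable {ι R : Type*} [Fintype ι] [DecidableEq ι] [CommRing R]

lemma diagonal_lie_apply (d : ι → R) (M : Matrix ι ι R) (p q : ι) :
    ⁅diagonal d, M⁆ p q = (d p - d q) * M p q := by
  simp only [Ring.lie_def, sub_apply, diagonal_mul, mul_diagonal]
  ring

lemma lie_diagonal_apply (M : Matrix ι ι R) (d : ι → R) (p q : ι) :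
    ⁅M, diagonal d⁆ p q = (d q - d p) * M p q := by
  simp only [Ring.lie_def, sub_apply, diagonal_mul, mul_diagonal]
  ring

lemma diagonal_lie_diagonal (d e : ι → R) : ⁅diagonal d, diagonal e⁆ = 0 := by
  simp only [Ring.lie_def, diagonal_mul_diagonal, mul_comm, sub_self]

lemma diagonal_lie_single (d : ι → R) (i j : ι) (c : R) :
    ⁅diagonal d, single i j c⁆ = (d i - d j) • single i j c := by
  ext p q
  rw [diagonal_lie_apply, smul_apply, smul_eq_mul]
  by_cases h : i = p ∧ j = q
  · obtain ⟨rfl, rfl⟩ := h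
    rfl
  · simp only [single_apply_of_ne _ _ _ _ _ h, mul_zero]

end Matrix

lemma Matrix.IsUpperTriangular.map_eq_sum_smul_one {ι R : Type*} [Fintype ι] [LinearOrder ι]
    [CommRing R] {A : Matrix ι ι R}
    (hA : A.IsUpperTriangular) (φ : Matrix ι ι R →ₗ[R] Matrix ι ι R) (c : ι → R)
    (hdiag : ∀ k, φ (single k k 1) = c k • 1) (hoff : ∀ i j, i < j → φ (single i j 1) = 0) :
    φ A = (∑ k, c k * A k k) • 1 := by
  have hterm (i j : ι) : φ (single i j (A i j)) = if i = j then (c i * A i i) • 1 else 0 := by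
    have hsingle : single i j (A i j) = A i j • single i j 1 := by
      rw [smul_single, smul_eq_mul, mul_one]
    rcases lt_trichotomy i j with h | rfl | h
    · rw [hsingle, map_smul, hoff i j h, smul_zero, if_neg h.ne]
    · rw [hsingle, map_smul, hdiag, smul_smul, if_pos rfl, mul_comm]
    · rw [hA h, single_zero, map_zero, if_neg h.ne']
  conv_lhs => rw [matrix_eq_sum_single A]
  simp only [map_sum, hterm, Finset.sum_ite_eq, Finset.mem_univ, if_true, Finset.sum_smul]

lemma exists_eq_sub_of_add_eq {ι G : Type*} [LinearOrder ι] [Finite ι] [AddCommGroup G]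
    (l : ι → ι → G) (hl : ∀ i j k, i < j → j < k → l i k = l i j + l j k) :
    ∃ t : ι → G, ∀ i j, i < j → l i j = t j - t i := by
  cases isEmpty_or_nonempty ι
  · exact ⟨0, fun i => isEmptyElim i⟩
  obtain ⟨z, hz⟩ : ∃ z : ι, ∀ i, z ≤ i := Finite.exists_min id
  refine ⟨fun j => if z < j then l z j else 0, fun i j hij => ?_⟩
  have hzj : z < j := (hz i).trans_lt hij
  rcases (hz i).lt_or_eq with hzi | rfl
  · simp only [if_pos hzj, if_pos hzi]
    rw [hl z i j hzi hij, add_sub_cancel_left]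
  · simp only [if_pos hzj, lt_irrefl, if_false, sub_zero]

/-- Bracketing with `diagonal (Pi.single k 1)` scales the `(p, q)` entry by `δ k p - δ k q`; for
`i < j` no upper triangular entry other than `(i, j)` carries the weight of `(i, j)`. The entry
`(j, i)` has the opposite weight, which in characteristic `2` is the same. -/
lemma eq_zero_of_forall_weight_eq {ι R : Type*} [LinearOrder ι] [CommRing R] {i j p q : ι}
    (hij : i < j) (hpq : p ≤ q) (hne : ¬(p = i ∧ q = j)) {m : R}
    (h : ∀ k, ((Pi.single k 1 : ι → R) i - (Pi.single k 1 : ι → R) j) * m =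
      ((Pi.single k 1 : ι → R) p - (Pi.single k 1 : ι → R) q) * m) :
    m = 0 := by
  rcases hpq.eq_or_lt with rfl | hpq
  · simpa [hij.ne] using h i
  by_cases hpi : p = i
  · subst hpi
    have hqj : q ≠ j := fun h => hne ⟨rfl, h⟩
    simpa [hpq.ne', hqj] using h q
  by_cases hpj : p = j
  · subst hpj
    simpa [(hij.trans hpq).ne', hpq.ne'] using h q
  · simpa [hpi, hpj, hpq.ne, Ne.symm hpi, Ne.symm hpj] using (h p).symm

section

variable {ι R : Type*} [Fintype ι] [LinearOrder ι] [CommRing R]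

attribute [local instance] LieRing.ofAssociativeRing

structure IsUpperTriangularDerivation (f : Matrix ι ι R →ₗ[R] Matrix ι ι R) : Prop where
  mapsTo ⦃A : Matrix ι ι R⦄ : A.IsUpperTriangular → (f A).IsUpperTriangular
  map_lie ⦃A B : Matrix ι ι R⦄ : A.IsUpperTriangular → B.IsUpperTriangular →
    f ⁅A, B⁆ = ⁅f A, B⁆ + ⁅A, f B⁆

namespace IsUpperTriangularDerivation

variable {f : Matrix ι ι R →ₗ[R] Matrix ι ι R}

lemma sub_ad (hf : IsUpperTriangularDerivation f) {X : Matrix ι ι R} (hX : X.IsUpperTriangular) :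
    IsUpperTriangularDerivation (f - LieAlgebra.ad R (Matrix ι ι R) X) where
  mapsTo A hA := by
    simpa only [LinearMap.sub_apply, LieAlgebra.ad_apply, Ring.lie_def] using
      (hf.mapsTo hA).sub ((hX.mul hA).sub (hA.mul hX))
  map_lie A B hA hB := by
    simp only [LinearMap.sub_apply, LieAlgebra.ad_apply]
    rw [hf.map_lie hA hB, leibniz_lie, sub_lie, lie_sub]
    abel

lemma exists_isDiag_sub_ad (hf : IsUpperTriangularDerivation f) :
    ∃ X : Matrix ι ι R, X.IsUpperTriangular ∧
      ∀ k, ((f - LieAlgebra.ad R (Matrix ι ι R) X) (single k k 1)).IsDiag := by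
  refine ⟨of fun p q => f (single q q 1) p q,
    fun p q hqp => hf.mapsTo (blockTriangular_single le_rfl 1) hqp, fun k p q hpq => ?_⟩
  have h := congrFun₂ (hf.map_lie (blockTriangular_diagonal (Pi.single k (1 : R)))
    (blockTriangular_diagonal (Pi.single q (1 : R)))) p q
  rw [diagonal_lie_diagonal, map_zero] at h
  simp only [LinearMap.sub_apply, LieAlgebra.ad_apply]
  rw [Matrix.sub_apply, ← diagonal_single, lie_diagonal_apply, diagonal_single, of_apply]
  rw [Matrix.add_apply, lie_diagonal_apply, diagonal_lie_apply, Matrix.zero_apply] at h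
  simp only [diagonal_single] at h
  rw [Pi.single_eq_same, Pi.single_eq_of_ne hpq] at h
  linear_combination -h

lemma apply_single_self_eq_smul_one (hf : IsUpperTriangularDerivation f)
    (hd : ∀ k, (f (single k k 1)).IsDiag) (k : ι) :
    f (single k k 1) = f (single k k 1) k k • 1 := by
  set d := diag (f (single k k 1))
  have hfk : f (single k k 1) = diagonal d := ((isDiag_iff_diagonal_diag _).mp (hd k)).symm
  have hstep (j l : ι) (hjl : j < l) : d j = d l := by
    have h := congrFun₂ (hf.map_lie (blockTriangular_diagonal (Pi.single k (1 : R)))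
      (blockTriangular_single hjl.le (1 : R))) j l
    rw [diagonal_lie_single, map_smul, Matrix.add_apply, diagonal_lie_apply, diagonal_single, hfk,
      diagonal_lie_single, Matrix.smul_apply, Matrix.smul_apply, single_apply_same, smul_eq_mul,
      smul_eq_mul, mul_one] at h
    linear_combination -h
  have hconst (p : ι) : d p = d k := by
    rcases lt_trichotomy p k with hpk | rfl | hkp
    exacts [hstep p k hpk, rfl, (hstep k p hkp).symm]
  calc f (single k k 1) = diagonal d := hfk
    _ = d k • 1 := by rw [smul_one_eq_diagonal, funext hconst]

lemma apply_single_eq_smul_single (hf : IsUpperTriangularDerivation f)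
    (hc : ∀ k, ∃ c : R, f (single k k 1) = c • 1) {i j : ι}
    (hij : i < j) : f (single i j 1) = f (single i j 1) i j • single i j 1 := by
  ext p q
  have hweight (k : ι) : ((Pi.single k 1 : ι → R) i - (Pi.single k 1 : ι → R) j) *
      f (single i j 1) p q =
      ((Pi.single k 1 : ι → R) p - (Pi.single k 1 : ι → R) q) * f (single i j 1) p q := by
    obtain ⟨c, hck⟩ := hc k
    have h := congrFun₂ (hf.map_lie (blockTriangular_diagonal (Pi.single k (1 : R)))
      (blockTriangular_single hij.le (1 : R))) p q
    rw [diagonal_lie_single, map_smul, Matrix.add_apply, diagonal_lie_apply, diagonal_single, hck,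
      Ring.lie_def, smul_one_mul, mul_smul_one, sub_self, Matrix.zero_apply, zero_add,
      Matrix.smul_apply, smul_eq_mul] at h
    exact h
  rcases lt_or_ge q p with hqp | hpq
  · have hne : ¬(i = p ∧ j = q) := by
      rintro ⟨rfl, rfl⟩
      exact hqp.not_gt hij
    rw [hf.mapsTo (blockTriangular_single hij.le 1) hqp, Matrix.smul_apply,
      single_apply_of_ne _ _ _ _ _ hne, smul_zero]
  by_cases hpq' : p = i ∧ q = j
  · obtain ⟨rfl, rfl⟩ := hpq'
    rw [Matrix.smul_apply, single_apply_same, smul_eq_mul, mul_one]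
  · have hne : ¬(i = p ∧ j = q) := fun h => hpq' ⟨h.1.symm, h.2.symm⟩
    rw [eq_zero_of_forall_weight_eq hij hpq hpq' hweight, Matrix.smul_apply,
      single_apply_of_ne _ _ _ _ _ hne, smul_zero]

lemma apply_single_apply_add (hf : IsUpperTriangularDerivation f)
    (hsc : ∀ i j : ι, i < j → f (single i j 1) = f (single i j 1) i j • single i j 1)
    {i j k : ι} (hij : i < j) (hjk : j < k) :
    f (single i k 1) i k = f (single i j 1) i j + f (single j k 1) j k := by
  have hlie : ⁅single i j (1 : R), single j k (1 : R)⁆ = single i k 1 := by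
    rw [Ring.lie_def, single_mul_single_same, single_mul_single_of_ne (h := (hij.trans hjk).ne'),
      mul_one, sub_zero]
  have h := congrFun₂ (hf.map_lie (blockTriangular_single hij.le (1 : R))
    (blockTriangular_single hjk.le (1 : R))) i k
  rw [hlie, hsc i j hij, hsc j k hjk, smul_lie, lie_smul, hlie, ← add_smul, Matrix.smul_apply,
    single_apply_same, smul_eq_mul, mul_one] at h
  exact h

lemma exists_eq_diagonal_lie_add_smul_one (hf : IsUpperTriangularDerivation f)
    (hd : ∀ k, (f (single k k 1)).IsDiag) :
    ∃ t c : ι → R, ∀ A : Matrix ι ι R, A.IsUpperTriangular →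
      f A = ⁅diagonal t, A⁆ + (∑ k, c k * A k k) • 1 := by
  have hscalar := hf.apply_single_self_eq_smul_one hd
  have hsc (i j : ι) (hij : i < j) := hf.apply_single_eq_smul_single (fun k => ⟨_, hscalar k⟩) hij
  obtain ⟨t, ht⟩ := exists_eq_sub_of_add_eq (fun i j => f (single i j 1) i j)
    fun i j k => hf.apply_single_apply_add hsc
  refine ⟨-t, fun k => f (single k k 1) k k, fun A hA => ?_⟩
  rw [← sub_eq_iff_eq_add']
  refine hA.map_eq_sum_smul_one (f - LieAlgebra.ad R (Matrix ι ι R) (diagonal (-t))) _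
    (fun k => ?_) (fun i j hij => ?_)
  · rw [LinearMap.sub_apply, LieAlgebra.ad_apply, diagonal_lie_single, sub_self, zero_smul,
      sub_zero]
    exact hscalar k
  · rw [LinearMap.sub_apply, LieAlgebra.ad_apply, diagonal_lie_single, hsc i j hij, ht i j hij,
      ← sub_smul, Pi.neg_apply, Pi.neg_apply, neg_sub_neg, sub_self, zero_smul]

end IsUpperTriangularDerivation

end

theorem stmt19_general (F : Type*) [Field F] (n : ℕ)
    (f : Matrix (Fin n) (Fin n) F →ₗ[F] Matrix (Fin n) (Fin n) F)
    (hmap : ∀ A : Matrix (Fin n) (Fin n) F,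
      (∀ i j : Fin n, (j : ℕ) < (i : ℕ) → A i j = 0) →
      ∀ i j : Fin n, (j : ℕ) < (i : ℕ) → f A i j = 0)
    (hder : ∀ A B : Matrix (Fin n) (Fin n) F,
      (∀ i j : Fin n, (j : ℕ) < (i : ℕ) → A i j = 0) →
      (∀ i j : Fin n, (j : ℕ) < (i : ℕ) → B i j = 0) →
      f (A * B - B * A) = (f A * B - B * f A) + (A * f B - f B * A)) :
    ∃ (X : Matrix (Fin n) (Fin n) F) (c : Fin n → F),
      (∀ i j : Fin n, (j : ℕ) < (i : ℕ) → X i j = 0) ∧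
      ∀ A : Matrix (Fin n) (Fin n) F,
        (∀ i j : Fin n, (j : ℕ) < (i : ℕ) → A i j = 0) →
        f A = (X * A - A * X) + (∑ k, c k * A k k) • (1 : Matrix (Fin n) (Fin n) F) := by
  have hf : IsUpperTriangularDerivation f :=
    ⟨hmap, fun A B hA hB => by simpa only [Ring.lie_def] using hder A B hA hB⟩
  obtain ⟨X, hX, hdiag⟩ := hf.exists_isDiag_sub_ad
  obtain ⟨t, c, ht⟩ := (hf.sub_ad hX).exists_eq_diagonal_lie_add_smul_one hdiag
  refine ⟨X + diagonal t, c, hX.add (blockTriangular_diagonal t), fun A hA => ?_⟩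
  have hA' := ht A hA
  rw [LinearMap.sub_apply, LieAlgebra.ad_apply, sub_eq_iff_eq_add'] at hA'
  rw [hA', Ring.lie_def, Ring.lie_def, add_mul, mul_add]
  abel

theorem stmt19 (F : Type*) [Field F] (hchar : ringChar F ≠ 2) (n : ℕ) (hn : 2 ≤ n)
    (f : Matrix (Fin n) (Fin n) F →ₗ[F] Matrix (Fin n) (Fin n) F)
    (hmap : ∀ A : Matrix (Fin n) (Fin n) F,
      (∀ i j : Fin n, (j : ℕ) < (i : ℕ) → A i j = 0) →
      ∀ i j : Fin n, (j : ℕ) < (i : ℕ) → f A i j = 0)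
    (hder : ∀ A B : Matrix (Fin n) (Fin n) F,
      (∀ i j : Fin n, (j : ℕ) < (i : ℕ) → A i j = 0) →
      (∀ i j : Fin n, (j : ℕ) < (i : ℕ) → B i j = 0) →
      f (A * B - B * A) = (f A * B - B * f A) + (A * f B - f B * A)) :
    ∃ (X : Matrix (Fin n) (Fin n) F) (c : Fin n → F),
      (∀ i j : Fin n, (j : ℕ) < (i : ℕ) → X i j = 0) ∧
      ∀ A : Matrix (Fin n) (Fin n) F,
        (∀ i j : Fin n, (j : ℕ) < (i : ℕ) → A i j = 0) →
        f A = (X * A - A * X) + (∑ k, c k * A k k) • (1 : Matrix (Fin n) (Fin n) F) :=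
  stmt19_general F n f hmap hder
end
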